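/- arXiv:math/0212026 — 6 statements merged into one kernel-verified Lean document; each statement's English description precedes it below -/
import Mathlib

section
/- Let K ⊆ ω^ω be compact and let C ⊆ [K]² be an F_σ pair coloring. Then C is induced by a basic coloring tree; explicitly, if C = ⋃_n C_n with each C_n closed, then T = { (x↾n, y↾n, k) : {x,y} ∈ C_k and k ≤ n } is a basic coloring tree inducing C. -/
namespace AC

/-- The restriction `x ↾ n` of `x : ω^ω`, as a list of length `n`. -/
def restr (x : ℕ → ℕ) (n : ℕ) : List ℕ := (List.range n).map x

/-- The support tree of a pair coloring tree `T ⊆ ⋃ₙ ω^n × ω^n × ω`: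
all initial segments of first coordinates of elements of `T`. -/
def psupp (T : Set (List ℕ × List ℕ × ℕ)) : Set (List ℕ) :=
  {s | ∃ p ∈ T, s <+: p.1}

/-- `T` is a basic (pair) coloring tree whose set of levels is `L`: it consists of
triples `(x, y, k)` with `x, y ∈ ω^n` (`n ∈ L`) and `k ∈ ω`, it is symmetric in the
first two coordinates, every element extends (with the same color) to every higher
level in `L`, on each level only finitely many colors occur, and the support tree is
finitely branching (so it determines a compact set). -/
structure IsBasicTree (T : Set (List ℕ × List ℕ × ℕ)) (L : Set ℕ) : Prop where
  len_eq : ∀ p ∈ T, p.1.length = p.2.1.length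
  lev_mem : ∀ p ∈ T, p.1.length ∈ L
  symm : ∀ p ∈ T, (p.2.1, p.1, p.2.2) ∈ T
  ext : ∀ p ∈ T, ∀ m ∈ L, p.1.length < m →
    ∃ x' y', p.1 <+: x' ∧ p.2.1 <+: y' ∧ x'.length = m ∧ (x', y', p.2.2) ∈ T
  colors_fin : ∀ n : ℕ, {k | ∃ x y : List ℕ, x.length = n ∧ (x, y, k) ∈ T}.Finite
  fin_branch : ∀ s : List ℕ, {m : ℕ | s ++ [m] ∈ psupp T}.Finite

/-- The set of branches through the support tree of `T`. -/
def branches (T : Set (List ℕ × List ℕ × ℕ)) : Set (ℕ → ℕ) :=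
  {x | ∀ n, restr x n ∈ psupp T}

/-- The pair coloring induced by `T` (as a symmetric set of ordered pairs):
`C = { {x,y} : x ≠ y ∧ ∃ k ∃ n₀ ∀ n > n₀, (x↾n, y↾n, k) ∈ T }`. -/
def pinduced (T : Set (List ℕ × List ℕ × ℕ)) : Set ((ℕ → ℕ) × (ℕ → ℕ)) :=
  {p | p.1 ≠ p.2 ∧ ∃ k n₀ : ℕ, ∀ n > n₀, (restr p.1 n, restr p.2 n, k) ∈ T}

end AC


namespace AC

lemma restr_length (x : ℕ → ℕ) (n : ℕ) : (restr x n).length = n := by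
  simp [restr]

lemma restr_prefix (x : ℕ → ℕ) {n m : ℕ} (h : n ≤ m) : restr x n <+: restr x m := by
  refine List.IsPrefix.map x ?_
  rw [List.prefix_iff_eq_take, List.length_range, List.take_range, min_eq_left h]

lemma restr_eq_apply {x y : ℕ → ℕ} {n : ℕ} (h : restr x n = restr y n) {i : ℕ} (hi : i < n) :
    x i = y i := by
  rw [restr, restr, List.map_inj_left] at h
  exact h i (List.mem_range.2 hi)

lemma restr_succ (x : ℕ → ℕ) (n : ℕ) : restr x (n + 1) = restr x n ++ [x n] := by
  simp [restr, List.range_succ]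

end AC

/-- Let `K ⊆ ω^ω` be compact and `C ⊆ [K]²` an `F_σ` pair coloring,
say `C = ⋃ₙ Cₙ` with each `Cₙ` closed (represented by symmetric sets of ordered pairs
of distinct elements of `K`).  Then the explicit tree
`T = { (x↾n, y↾n, k) : {x,y} ∈ C_k ∧ k ≤ n }` is a basic coloring tree inducing `C`. -/
theorem Fsigma_coloring_induced_by_basicTree
    (K : Set (ℕ → ℕ)) (hK : IsCompact K)
    (C : Set ((ℕ → ℕ) × (ℕ → ℕ))) (Cn : ℕ → Set ((ℕ → ℕ) × (ℕ → ℕ)))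
    (hcl : ∀ k, IsClosed (Cn k)) (hU : C = ⋃ k, Cn k)
    (hsub : ∀ k, Cn k ⊆ K ×ˢ K)
    (hsymm : ∀ k, ∀ p ∈ Cn k, (p.2, p.1) ∈ Cn k)
    (hne : ∀ k, ∀ p ∈ Cn k, p.1 ≠ p.2) :
    AC.IsBasicTree
      {q : List ℕ × List ℕ × ℕ | ∃ x y : ℕ → ℕ, (x, y) ∈ Cn q.2.2 ∧
        ∃ n : ℕ, q.2.2 ≤ n ∧ q.1 = AC.restr x n ∧ q.2.1 = AC.restr y n}
      Set.univ ∧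
    AC.pinduced
      {q : List ℕ × List ℕ × ℕ | ∃ x y : ℕ → ℕ, (x, y) ∈ Cn q.2.2 ∧
        ∃ n : ℕ, q.2.2 ≤ n ∧ q.1 = AC.restr x n ∧ q.2.1 = AC.restr y n} = C := by
  constructor
  · constructor
    · rintro ⟨a, b, k⟩ ⟨x, y, hxy, n, hkn, ha, hb⟩
      dsimp only at ha hb
      simp only [ha, hb, AC.restr_length]
    · intro p _; trivial
    · rintro ⟨a, b, k⟩ ⟨x, y, hxy, n, hkn, ha, hb⟩
      exact ⟨y, x, hsymm k _ hxy, n, hkn, hb, ha⟩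
    · rintro ⟨a, b, k⟩ ⟨x, y, hxy, n, hkn, ha, hb⟩ m _ hm
      dsimp only at ha hb hxy hkn hm
      have hn : a.length = n := by rw [ha]; exact AC.restr_length x n
      rw [hn] at hm
      refine ⟨AC.restr x m, AC.restr y m, ha ▸ AC.restr_prefix x hm.le,
        hb ▸ AC.restr_prefix y hm.le, AC.restr_length x m,
        ⟨x, y, hxy, m, hkn.trans hm.le, rfl, rfl⟩⟩
    · intro n
      refine Set.Finite.subset (Set.finite_Iic n) ?_
      rintro k ⟨a, b, hlen, x, y, hxy, n', hkn', ha, hb⟩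
      dsimp only at ha hb hkn'
      have : a.length = n' := by rw [ha]; exact AC.restr_length x n'
      exact Set.mem_Iic.2 (hkn'.trans (by omega))
    · intro s
      refine Set.Finite.subset
        (Set.Finite.subset ((hK.image (continuous_apply s.length)).finite ⟨inferInstance⟩)
          (subset_refl _)) ?_
      rintro m ⟨⟨a, b, k⟩, ⟨x, y, hxy, n, hkn, ha, hb⟩, hpre⟩
      dsimp only at ha hb hxy hpre
      have hle : s.length + 1 ≤ n := by
        have := hpre.length_le
        simpa [ha, AC.restr_length] using this
      have h1 : s ++ [m] <+: AC.restr x (s.length + 1) := by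
        refine List.prefix_of_prefix_length_le (ha ▸ hpre) (AC.restr_prefix x hle) ?_
        simp [AC.restr_length]
      have h2 : s ++ [m] = AC.restr x (s.length + 1) :=
        h1.eq_of_length (by simp [AC.restr_length])
      rw [AC.restr_succ] at h2
      obtain ⟨-, h3⟩ := List.append_inj' h2 rfl
      have hm : m = x s.length := by simpa using h3
      exact ⟨x, (hsub k hxy).1, hm.symm⟩
  · ext ⟨x, y⟩
    constructor
    · rintro ⟨hxy, k, n₀, h⟩
      have H : ∀ j : ℕ, ∃ uv : (ℕ → ℕ) × (ℕ → ℕ), uv ∈ Cn k ∧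
          (∀ i < n₀ + 1 + j, x i = uv.1 i) ∧ (∀ i < n₀ + 1 + j, y i = uv.2 i) := by
        intro j
        obtain ⟨u, v, huv, n', hkn', hx, hy⟩ := h (n₀ + 1 + j) (by omega)
        have hn' : n' = n₀ + 1 + j := by
          have := congrArg List.length hx
          simpa [AC.restr_length] using this.symm
        subst hn'
        exact ⟨(u, v), huv, fun i hi => AC.restr_eq_apply hx hi,
          fun i hi => AC.restr_eq_apply hy hi⟩
      choose uv huvC hxu hyv using H
      have h1 : Filter.Tendsto (fun j => (uv j).1) Filter.atTop (nhds x) := by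
        rw [tendsto_pi_nhds]; intro i
        exact tendsto_atTop_of_eventually_const fun j (hj : j ≥ i) =>
          (hxu j i (by omega)).symm
      have h2 : Filter.Tendsto (fun j => (uv j).2) Filter.atTop (nhds y) := by
        rw [tendsto_pi_nhds]; intro i
        exact tendsto_atTop_of_eventually_const fun j (hj : j ≥ i) =>
          (hyv j i (by omega)).symm
      have ht : Filter.Tendsto uv Filter.atTop (nhds (x, y)) := h1.prodMk_nhds h2
      have hmem : (x, y) ∈ Cn k :=
        (hcl k).mem_of_tendsto ht (Filter.Eventually.of_forall huvC)
      rw [hU]; exact Set.mem_iUnion.2 ⟨k, hmem⟩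
    · intro hxy
      rw [hU] at hxy
      obtain ⟨k, hk⟩ := Set.mem_iUnion.1 hxy
      exact ⟨hne k _ hk, k, k, fun n hn => ⟨x, y, hk, n, hn.le, rfl, rfl⟩⟩
end

section
/- Let (T, r, c) be a γ-ranked coloring tree. Then rk_T(u, h) ≤ r(u, h) for every approximation (u, h) ∈ app(T). Conversely, if T is a basic coloring tree with rk(T) ≤ γ then there exist functions r and c making (T, r, c) a γ-ranked coloring tree. -/
namespace AC

/-- `(n, u, h)` is an approximation of the pair coloring tree `T`: `u` is a finite set of
sequences of length `n` with at least two elements and `h` assigns colors to pairs from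
`u`, symmetrically, so that `(x, y, h x y) ∈ T` for distinct `x, y ∈ u`. -/
structure IsPApprox (T : Set (List ℕ × List ℕ × ℕ)) (n : ℕ) (u : Finset (List ℕ))
    (h : List ℕ → List ℕ → ℕ) : Prop where
  len : ∀ s ∈ u, s.length = n
  two_le : 2 ≤ u.card
  mem : ∀ x ∈ u, ∀ y ∈ u, x ≠ y → (x, y, h x y) ∈ T
  symm : ∀ x y : List ℕ, h x y = h y x

/-- The strict order on approximations: `(u, h) < (u', h')` iff `u ◁ u'` and the colors
agree along restriction: `h' x' y' = h (x'↾n) (y'↾n)` for all pairs of `u'` whose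
restrictions stay distinct. -/
def PStronger (n : ℕ) (u : Finset (List ℕ)) (h : List ℕ → List ℕ → ℕ)
    (n' : ℕ) (u' : Finset (List ℕ)) (h' : List ℕ → List ℕ → ℕ) : Prop :=
  n < n' ∧ u = u'.image (fun s => s.take n) ∧
    ∀ x' ∈ u', ∀ y' ∈ u', x'.take n ≠ y'.take n →
      h (x'.take n) (y'.take n) = h' x' y'

/-- `p` has at least two extensions in `u'`. -/
def PSplits (p : List ℕ) (n : ℕ) (u' : Finset (List ℕ)) : Prop :=
  ∃ q₁ ∈ u', ∃ q₂ ∈ u', q₁ ≠ q₂ ∧ q₁.take n = p ∧ q₂.take n = p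

/-- `PRankGe T α n u h` means `rk_T(u, h) ≥ α`: for every `β < α` and every `p ∈ u`
there is a stronger approximation of rank `≥ β` in which `p` splits. -/
def PRankGe (T : Set (List ℕ × List ℕ × ℕ)) (α : Ordinal) (n : ℕ)
    (u : Finset (List ℕ)) (h : List ℕ → List ℕ → ℕ) : Prop :=
  ∀ β < α, ∀ p ∈ u, ∃ (n' : ℕ) (u' : Finset (List ℕ)) (h' : List ℕ → List ℕ → ℕ),
    IsPApprox T n' u' h' ∧ PStronger n u h n' u' h' ∧ PSplits p n u' ∧
    PRankGe T β n' u' h'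
termination_by α

/-- `(T, r, c)` is a `γ`-ranked coloring tree: `r` assigns ordinals `< γ` and `c`
critical elements to approximations of `T`, subject to (U₁)–(U₃). -/
structure IsRanked (T : Set (List ℕ × List ℕ × ℕ)) (γ : Ordinal)
    (r : ℕ → Finset (List ℕ) → (List ℕ → List ℕ → ℕ) → Ordinal)
    (c : ℕ → Finset (List ℕ) → (List ℕ → List ℕ → ℕ) → List ℕ) : Prop where
  r_lt : ∀ n u h, IsPApprox T n u h → r n u h < γ
  c_mem : ∀ n u h, IsPApprox T n u h → c n u h ∈ u
  U1 : ∀ n u h n' u' h', IsPApprox T n u h → IsPApprox T n' u' h' →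
    PStronger n u h n' u' h' → r n' u' h' ≤ r n u h
  U1' : ∀ n u h n' u' h', IsPApprox T n u h → IsPApprox T n' u' h' →
    PStronger n u h n' u' h' → PSplits (c n u h) n u' → r n' u' h' < r n u h
  U2 : ∀ n u h n' u' h', IsPApprox T n u h → IsPApprox T n' u' h' →
    PStronger n u h n' u' h' → r n u h = r n' u' h' → u.card = u'.card →
      c n u h <+: c n' u' h'
  U3 : ∀ n u h w, IsPApprox T n u h → w ⊆ u → 2 ≤ w.card → r n u h ≤ r n w h

/-- The set of colors occurring in `T`. -/
def pcolors (T : Set (List ℕ × List ℕ × ℕ)) : Set ℕ :=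
  {k | ∃ x y : List ℕ, (x, y, k) ∈ T}

/-- `(S, rS, cS)` is a `γ`-template: a `γ`-ranked coloring tree of height 2 (levels of
lengths 1 and 2) whose support is a finite binary tree. -/
structure IsTemplate (γ : Ordinal) (S : Set (List ℕ × List ℕ × ℕ))
    (rS : ℕ → Finset (List ℕ) → (List ℕ → List ℕ → ℕ) → Ordinal)
    (cS : ℕ → Finset (List ℕ) → (List ℕ → List ℕ → ℕ) → List ℕ) : Prop where
  basic : IsBasicTree S {1, 2}
  ranked : IsRanked S γ rS cS
  finite : S.Finite
  binary : ∀ s : List ℕ, s.length = 1 → {m : ℕ | s ++ [m] ∈ psupp S}.encard ≤ 2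

/-- An embedding of the `γ`-ranked tree `(S, rS, cS)` into `(T, rT, cT)`: an injective,
order- and level-preserving map `f` of supports together with an injective map `fc` of
colors, compatible with the colorings, which weakly increases ranks of approximations
and maps critical elements to critical elements. -/
structure IsTreeEmbedding (S : Set (List ℕ × List ℕ × ℕ))
    (rS : ℕ → Finset (List ℕ) → (List ℕ → List ℕ → ℕ) → Ordinal)
    (cS : ℕ → Finset (List ℕ) → (List ℕ → List ℕ → ℕ) → List ℕ)
    (T : Set (List ℕ × List ℕ × ℕ))
    (rT : ℕ → Finset (List ℕ) → (List ℕ → List ℕ → ℕ) → Ordinal)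
    (cT : ℕ → Finset (List ℕ) → (List ℕ → List ℕ → ℕ) → List ℕ)
    (f : List ℕ → List ℕ) (fc : ℕ → ℕ) : Prop where
  inj : Set.InjOn f (psupp S)
  mono : ∀ s ∈ psupp S, ∀ t ∈ psupp S, (s <+: t ↔ f s <+: f t)
  level : ∀ s ∈ psupp S, ∀ t ∈ psupp S, s.length = t.length →
    (f s).length = (f t).length
  colors_inj : Set.InjOn fc (pcolors S)
  maps : ∀ p ∈ S, (f p.1, f p.2.1, fc p.2.2) ∈ T
  approx : ∀ n u h, IsPApprox S n u h →
    ∀ n' h', IsPApprox T n' (u.image f) h' →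
      (∀ x ∈ u, ∀ y ∈ u, x ≠ y → h' (f x) (f y) = fc (h x y)) →
      rS n u h ≤ rT n' (u.image f) h' ∧ f (cS n u h) = cT n' (u.image f) h'

/-- The bottom level of a template: its triples of length-1 sequences. -/
def tbot (S : Set (List ℕ × List ℕ × ℕ)) : Set (List ℕ × List ℕ × ℕ) :=
  {p ∈ S | p.1.length = 1}

/-- `(T, rT, cT)` is a universal `γ`-ranked coloring tree: a `γ`-ranked coloring tree of
height `ω` such that every embedding of the bottom level of a `γ`-template into it
(a partial embedding) extends to a full embedding of the template. -/
structure IsUniversal (γ : Ordinal) (T : Set (List ℕ × List ℕ × ℕ))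
    (rT : ℕ → Finset (List ℕ) → (List ℕ → List ℕ → ℕ) → Ordinal)
    (cT : ℕ → Finset (List ℕ) → (List ℕ → List ℕ → ℕ) → List ℕ) : Prop where
  basic : IsBasicTree T Set.univ
  ranked : IsRanked T γ rT cT
  univ : ∀ S rS cS, IsTemplate γ S rS cS →
    ∀ f fc, IsTreeEmbedding (tbot S) rS cS T rT cT f fc →
      ∃ g gc, IsTreeEmbedding S rS cS T rT cT g gc ∧
        (∀ s ∈ psupp (tbot S), g s = f s) ∧ (∀ k ∈ pcolors (tbot S), gc k = fc k)

end AC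

namespace ACAux
open AC

universe u

variable {T : Set (List ℕ × List ℕ × ℕ)}

lemma prankGe_iff (T : Set (List ℕ × List ℕ × ℕ)) (α : Ordinal.{u}) (n : ℕ)
    (u : Finset (List ℕ)) (h : List ℕ → List ℕ → ℕ) :
    PRankGe T α n u h ↔ ∀ β < α, ∀ p ∈ u,
      ∃ (n' : ℕ) (u' : Finset (List ℕ)) (h' : List ℕ → List ℕ → ℕ),
        IsPApprox T n' u' h' ∧ PStronger n u h n' u' h' ∧ PSplits p n u' ∧
        PRankGe T β n' u' h' := by
  rw [PRankGe]

lemma prankGe_mono {α β : Ordinal.{u}} {n u h} (hle : β ≤ α)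
    (hα : PRankGe T α n u h) : PRankGe T β n u h := by
  rw [prankGe_iff] at hα ⊢
  exact fun β' hβ' => hα β' (hβ'.trans_le hle)

lemma not_prankGe_neg {α : Ordinal.{u}} {n u h} (hn : ¬ PRankGe T α n u h) :
    ∃ β < α, ¬ PRankGe T (Order.succ β) n u h := by
  rw [prankGe_iff] at hn; push_neg at hn
  obtain ⟨β, hβ, p, hp, hw⟩ := hn
  refine ⟨β, hβ, fun hs => ?_⟩
  rw [prankGe_iff] at hs
  obtain ⟨n', u', h', h1, h2, h3, h4⟩ := hs β (Order.lt_succ β) p hp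
  exact hw n' u' h' h1 h2 h3 h4

lemma take_eq_take_take {l : List ℕ} {n n' : ℕ} (hle : n ≤ n') :
    l.take n = (l.take n').take n := by
  rw [List.take_take, min_eq_left hle]

lemma pstronger_trans {n u h n' u' h' n'' u'' h''}
    (h1 : PStronger n u h n' u' h') (h2 : PStronger n' u' h' n'' u'' h'') :
    PStronger n u h n'' u'' h'' := by
  obtain ⟨hlt, himg, hcol⟩ := h1
  obtain ⟨hlt', himg', hcol'⟩ := h2
  refine ⟨hlt.trans hlt', ?_, ?_⟩
  · rw [himg, himg', Finset.image_image]
    apply Finset.image_congr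
    intro s _
    exact (take_eq_take_take hlt.le).symm
  · intro x'' hx'' y'' hy'' hne
    have hxm : x''.take n' ∈ u' := himg' ▸ Finset.mem_image_of_mem _ hx''
    have hym : y''.take n' ∈ u' := himg' ▸ Finset.mem_image_of_mem _ hy''
    have hxe : x''.take n = (x''.take n').take n := take_eq_take_take hlt.le
    have hye : y''.take n = (y''.take n').take n := take_eq_take_take hlt.le
    have hne' : (x''.take n').take n ≠ (y''.take n').take n := by
      rw [← hxe, ← hye]; exact hne
    have hne'' : x''.take n' ≠ y''.take n' := fun hc => hne' (by rw [hc])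
    calc h (x''.take n) (y''.take n) = h ((x''.take n').take n) ((y''.take n').take n) := by
          rw [← hxe, ← hye]
      _ = h' (x''.take n') (y''.take n') := hcol _ hxm _ hym hne'
      _ = h'' x'' y'' := hcol' _ hx'' _ hy'' hne''

lemma psplits_down {p : List ℕ} {n n' : ℕ} {u' : Finset (List ℕ)}
    (hle : n ≤ n') (hp : PSplits (p) n' u') {q : List ℕ} (hq : p.take n = q) :
    PSplits q n u' := by
  obtain ⟨q₁, hq₁, q₂, hq₂, hne, ht₁, ht₂⟩ := hp
  refine ⟨q₁, hq₁, q₂, hq₂, hne, ?_, ?_⟩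
  · rw [take_eq_take_take hle, ht₁, hq]
  · rw [take_eq_take_take hle, ht₂, hq]

lemma prankGe_of_stronger {α : Ordinal.{u}} {n u h n' u' h'}
    (hst : PStronger n u h n' u' h') (hα : PRankGe T α n' u' h') :
    PRankGe T α n u h := by
  rw [prankGe_iff] at hα ⊢
  intro β hβ p hp
  obtain ⟨x', hx', hxp⟩ : ∃ x' ∈ u', x'.take n = p := by
    have := hst.2.1 ▸ hp
    simpa [Finset.mem_image] using this
  obtain ⟨n'', u'', h'', ha, hb, hc, hd⟩ := hα β hβ x' hx'
  exact ⟨n'', u'', h'', ha, pstronger_trans hst hb,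
    psplits_down hst.1.le hc hxp, hd⟩

lemma prankGe_subset : ∀ (α : Ordinal.{u}) {n : ℕ} {u w : Finset (List ℕ)}
    {h : List ℕ → List ℕ → ℕ}, w ⊆ u → PRankGe T α n u h → PRankGe T α n w h := by
  intro α
  induction α using Ordinal.induction with
  | h α IH =>
  intro n u w h hw hα
  rw [prankGe_iff] at hα ⊢
  intro β hβ p hp
  obtain ⟨n', u', h', ha, hb, hc, hd⟩ := hα β hβ p (hw hp)
  classical
  obtain ⟨q₁, hq₁, q₂, hq₂, hne, ht₁, ht₂⟩ := hc
  set w' := u'.filter (fun s => s.take n ∈ w) with hw'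
  have hq₁' : q₁ ∈ w' := Finset.mem_filter.mpr ⟨hq₁, by rw [ht₁]; exact hp⟩
  have hq₂' : q₂ ∈ w' := Finset.mem_filter.mpr ⟨hq₂, by rw [ht₂]; exact hp⟩
  have hsub : w' ⊆ u' := Finset.filter_subset _ _
  refine ⟨n', w', h', ?_, ?_, ⟨q₁, hq₁', q₂, hq₂', hne, ht₁, ht₂⟩, IH β hβ hsub hd⟩
  · refine ⟨fun s hs => ha.len s (hsub hs), ?_,
      fun x hx y hy hxy => ha.mem x (hsub hx) y (hsub hy) hxy, ha.symm⟩
    have h1 : 1 < w'.card := Finset.one_lt_card.mpr ⟨q₁, hq₁', q₂, hq₂', hne⟩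
    omega
  · refine ⟨hb.1, ?_, fun x' hx' y' hy' hne' =>
      hb.2.2 x' (hsub hx') y' (hsub hy') hne'⟩
    ext a
    simp only [Finset.mem_image, hw', Finset.mem_filter]
    constructor
    · intro haw
      obtain ⟨s, hs, hsa⟩ : ∃ s ∈ u', s.take n = a := by
        have := hb.2.1 ▸ (hw haw)
        simpa [Finset.mem_image] using this
      exact ⟨s, ⟨hs, hsa ▸ haw⟩, hsa⟩
    · rintro ⟨s, ⟨_, hsw⟩, rfl⟩
      exact hsw

/-- The true rank of a triple. -/
noncomputable def prank (T : Set (List ℕ × List ℕ × ℕ)) (n : ℕ)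
    (u : Finset (List ℕ)) (h : List ℕ → List ℕ → ℕ) : Ordinal.{u} :=
  sInf {α | ¬ PRankGe T (Order.succ α) n u h}

lemma prank_spec {γ : Ordinal.{u}} {n u h} (hγ : ¬ PRankGe T γ n u h) :
    ¬ PRankGe T (Order.succ (prank.{u} T n u h)) n u h := by
  have hne : {α : Ordinal.{u} | ¬ PRankGe T (Order.succ α) n u h}.Nonempty :=
    ⟨γ, fun hc => hγ (prankGe_mono (Order.le_succ γ) hc)⟩
  exact csInf_mem hne

lemma prankGe_of_le_prank {α : Ordinal.{u}} {n u h} (hα : α ≤ prank.{u} T n u h) :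
    PRankGe T α n u h := by
  by_contra hc
  obtain ⟨β, hβ, hβ'⟩ := not_prankGe_neg hc
  have hmem : β ∈ {α : Ordinal.{u} | ¬ PRankGe T (Order.succ α) n u h} := hβ'
  exact absurd (((csInf_le' hmem).trans_lt hβ).trans_le hα) (lt_irrefl _)

lemma prankGe_prank (n : ℕ) (u : Finset (List ℕ)) (h : List ℕ → List ℕ → ℕ) :
    PRankGe T (prank.{u} T n u h) n u h := prankGe_of_le_prank le_rfl

lemma prank_lt {γ : Ordinal.{u}} {n u h} (hγ : ¬ PRankGe T γ n u h) :
    prank.{u} T n u h < γ := by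
  obtain ⟨β, hβ, hβ'⟩ := not_prankGe_neg hγ
  have hmem : β ∈ {α : Ordinal.{u} | ¬ PRankGe T (Order.succ α) n u h} := hβ'
  exact (csInf_le' hmem).trans_lt hβ

lemma le_prank_of_prankGe {γ α : Ordinal.{u}} {n u h} (hγ : ¬ PRankGe T γ n u h)
    (hα : PRankGe T α n u h) : α ≤ prank.{u} T n u h := by
  by_contra hc
  exact prank_spec hγ (prankGe_mono (Order.succ_le_of_lt (not_le.mp hc)) hα)

lemma pstronger_congr {n u h₁ h₂ n' u' h'}
    (hagree : ∀ a ∈ u, ∀ b ∈ u, a ≠ b → h₁ a b = h₂ a b)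
    (hst : PStronger n u h₁ n' u' h') : PStronger n u h₂ n' u' h' := by
  refine ⟨hst.1, hst.2.1, fun x' hx' y' hy' hne => ?_⟩
  have hx : x'.take n ∈ u := hst.2.1 ▸ Finset.mem_image_of_mem _ hx'
  have hy : y'.take n ∈ u := hst.2.1 ▸ Finset.mem_image_of_mem _ hy'
  rw [← hagree _ hx _ hy hne]
  exact hst.2.2 x' hx' y' hy' hne

lemma prankGe_congr {α : Ordinal.{u}} {n u h₁ h₂}
    (hagree : ∀ a ∈ u, ∀ b ∈ u, a ≠ b → h₁ a b = h₂ a b)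
    (hα : PRankGe T α n u h₁) : PRankGe T α n u h₂ := by
  rw [prankGe_iff] at hα ⊢
  intro β hβ p hp
  obtain ⟨n', u', h', ha, hb, hc, hd⟩ := hα β hβ p hp
  exact ⟨n', u', h', ha, pstronger_congr hagree hb, hc, hd⟩

end ACAux
namespace ACAux
open AC

variable {T : Set (List ℕ × List ℕ × ℕ)}

/-- A canonical element of `u` whose `n0`-restriction is `a` (if one exists). -/
noncomputable def pickExt (u : Finset (List ℕ)) (n0 : ℕ) (a : List ℕ) : List ℕ :=
  if h : ∃ s ∈ u, s.take n0 = a then h.choose else a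

lemma pickExt_spec {u : Finset (List ℕ)} {n0 : ℕ} {a : List ℕ}
    (h : ∃ s ∈ u, s.take n0 = a) :
    pickExt u n0 a ∈ u ∧ (pickExt u n0 a).take n0 = a := by
  rw [pickExt, dif_pos h]
  exact ⟨h.choose_spec.1, h.choose_spec.2⟩

lemma pickExt_eq_of_inj {u : Finset (List ℕ)} {n0 : ℕ} {a s : List ℕ}
    (hinj : Set.InjOn (fun l : List ℕ => l.take n0) ↑u)
    (hs : s ∈ u) (ha : s.take n0 = a) : pickExt u n0 a = s := by
  have hex : ∃ t ∈ u, t.take n0 = a := ⟨s, hs, ha⟩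
  obtain ⟨h1, h2⟩ := pickExt_spec hex
  exact hinj h1 hs (h2.trans ha.symm)

/-- The coloring induced on the `n0`-restrictions of `u`. -/
noncomputable def hInd (h : List ℕ → List ℕ → ℕ) (u : Finset (List ℕ)) (n0 : ℕ) :
    List ℕ → List ℕ → ℕ :=
  fun a b => h (pickExt u n0 a) (pickExt u n0 b)

/-- `n0` is a qualifying level for the approximation `(n, u, h)`: its induced
restriction to level `n0` has the same rank and the same cardinality. -/
def QLev.{v} (T : Set (List ℕ × List ℕ × ℕ)) (n : ℕ) (u : Finset (List ℕ))
    (h : List ℕ → List ℕ → ℕ) (n0 : ℕ) : Prop :=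
  PRankGe T (prank.{v} T n u h) n0 (u.image (fun s => s.take n0)) (hInd h u n0) ∧
  ¬ PRankGe T (Order.succ (prank.{v} T n u h)) n0 (u.image (fun s => s.take n0))
      (hInd h u n0) ∧
  (u.image (fun s => s.take n0)).card = u.card

/-- The least qualifying level. -/
noncomputable def nStar.{v} (T : Set (List ℕ × List ℕ × ℕ)) (n : ℕ)
    (u : Finset (List ℕ)) (h : List ℕ → List ℕ → ℕ) : ℕ :=
  sInf {n0 | QLev.{v} T n u h n0}

/-- `p` is bad: no stronger approximation in which `p` splits has rank `≥ ρ`. -/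
def BadP.{v} (T : Set (List ℕ × List ℕ × ℕ)) (ρ : Ordinal.{v}) (n0 : ℕ)
    (u0 : Finset (List ℕ)) (h0 : List ℕ → List ℕ → ℕ) (p : List ℕ) : Prop :=
  ¬ ∃ (n' : ℕ) (u' : Finset (List ℕ)) (h' : List ℕ → List ℕ → ℕ),
      IsPApprox T n' u' h' ∧ PStronger n0 u0 h0 n' u' h' ∧ PSplits p n0 u' ∧
      PRankGe T ρ n' u' h'

noncomputable def pickIn (s : Finset (List ℕ)) : List ℕ :=
  if h : s.Nonempty then h.choose else []

lemma pickIn_mem {s : Finset (List ℕ)} (h : s.Nonempty) : pickIn s ∈ s := by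
  rw [pickIn, dif_pos h]; exact h.choose_spec

open scoped Classical in
/-- The set of bad elements of the restriction of `u` to the least qualifying level. -/
noncomputable def badFinset.{v} (T : Set (List ℕ × List ℕ × ℕ)) (n : ℕ)
    (u : Finset (List ℕ)) (h : List ℕ → List ℕ → ℕ) : Finset (List ℕ) :=
  (u.image (fun s => s.take (nStar.{v} T n u h))).filter
    (fun p => BadP.{v} T (prank.{v} T n u h) (nStar.{v} T n u h)
      (u.image (fun s => s.take (nStar.{v} T n u h))) (hInd h u (nStar.{v} T n u h)) p)

/-- The critical element of `(n, u, h)`. -/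
noncomputable def crit.{v} (T : Set (List ℕ × List ℕ × ℕ)) (n : ℕ)
    (u : Finset (List ℕ)) (h : List ℕ → List ℕ → ℕ) : List ℕ :=
  pickExt u (nStar.{v} T n u h) (pickIn (badFinset.{v} T n u h))

lemma image_take_self {n : ℕ} {u : Finset (List ℕ)} {h : List ℕ → List ℕ → ℕ}
    (ha : IsPApprox T n u h) : u.image (fun s => s.take n) = u := by
  have : ∀ s ∈ u, s.take n = s := fun s hs => by
    rw [← ha.len s hs]; exact @List.take_length _ s
  calc u.image (fun s => s.take n) = u.image id := Finset.image_congr this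
    _ = u := Finset.image_id

lemma pickExt_self {n : ℕ} {u : Finset (List ℕ)} {h : List ℕ → List ℕ → ℕ}
    (ha : IsPApprox T n u h) {a : List ℕ} (hau : a ∈ u) : pickExt u n a = a := by
  have hta : a.take n = a := by rw [← ha.len a hau]; exact @List.take_length _ a
  obtain ⟨h1, h2⟩ := pickExt_spec ⟨a, hau, hta⟩
  have ht1 : (pickExt u n a).take n = pickExt u n a := by
    have := @List.take_length _ (pickExt u n a)
    rwa [ha.len _ h1] at this
  rw [← ht1, h2]

lemma hInd_self {n : ℕ} {u : Finset (List ℕ)} {h : List ℕ → List ℕ → ℕ}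
    (ha : IsPApprox T n u h) {a b : List ℕ} (hau : a ∈ u) (hbu : b ∈ u) :
    hInd h u n a b = h a b := by
  rw [hInd, pickExt_self ha hau, pickExt_self ha hbu]

lemma qlev_self {γ : Ordinal.{u}} {n : ℕ} {u : Finset (List ℕ)}
    {h : List ℕ → List ℕ → ℕ} (ha : IsPApprox T n u h)
    (hγ : ¬ PRankGe T γ n u h) : QLev.{u} T n u h n := by
  rw [QLev, image_take_self ha]
  refine ⟨prankGe_congr (fun a hau b hbu _ => (hInd_self ha hau hbu).symm)
    (prankGe_prank n u h), fun hc => prank_spec hγ ?_, rfl⟩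
  exact prankGe_congr (fun a hau b hbu _ => hInd_self ha hau hbu) hc

lemma qlev_nStar {γ : Ordinal.{u}} {n : ℕ} {u : Finset (List ℕ)}
    {h : List ℕ → List ℕ → ℕ} (ha : IsPApprox T n u h)
    (hγ : ¬ PRankGe T γ n u h) :
    QLev.{u} T n u h (nStar.{u} T n u h) ∧ nStar.{u} T n u h ≤ n := by
  have hmem : n ∈ {n0 | QLev.{u} T n u h n0} := qlev_self ha hγ
  have hne : {n0 | QLev.{u} T n u h n0}.Nonempty := ⟨n, hmem⟩
  constructor
  · show nStar.{u} T n u h ∈ {n0 | QLev.{u} T n u h n0}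
    rw [nStar]; exact Nat.sInf_mem hne
  · rw [nStar]; exact Nat.sInf_le hmem

lemma badFinset_nonempty {γ : Ordinal.{u}} {n : ℕ} {u : Finset (List ℕ)}
    {h : List ℕ → List ℕ → ℕ} (ha : IsPApprox T n u h)
    (hγ : ¬ PRankGe T γ n u h) : (badFinset.{u} T n u h).Nonempty := by
  classical
  obtain ⟨hq, -⟩ := qlev_nStar ha hγ
  obtain ⟨-, hq2, -⟩ := hq
  rw [prankGe_iff] at hq2; push_neg at hq2
  obtain ⟨β, hβ, p, hp, hw⟩ := hq2
  refine ⟨p, Finset.mem_filter.mpr ⟨hp, ?_⟩⟩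
  rintro ⟨n', u', h', h1, h2, h3, h4⟩
  exact hw n' u' h' h1 h2 h3 (prankGe_mono (Order.lt_succ_iff.mp hβ) h4)

lemma crit_spec {γ : Ordinal.{u}} {n : ℕ} {u : Finset (List ℕ)}
    {h : List ℕ → List ℕ → ℕ} (ha : IsPApprox T n u h)
    (hγ : ¬ PRankGe T γ n u h) :
    crit.{u} T n u h ∈ u ∧
    (crit.{u} T n u h).take (nStar.{u} T n u h) = pickIn (badFinset.{u} T n u h) ∧
    pickIn (badFinset.{u} T n u h) ∈ badFinset.{u} T n u h := by
  classical
  have hb := pickIn_mem (badFinset_nonempty ha hγ)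
  have hbu : pickIn (badFinset.{u} T n u h) ∈
      u.image (fun s => s.take (nStar.{u} T n u h)) :=
    Finset.mem_of_mem_filter _ hb
  obtain ⟨s, hs, hsa⟩ := Finset.mem_image.mp hbu
  obtain ⟨h1, h2⟩ := pickExt_spec ⟨s, hs, hsa⟩
  exact ⟨h1, h2, hb⟩

end ACAux
namespace ACAux
open AC

variable {T : Set (List ℕ × List ℕ × ℕ)}

lemma image_take_of_stronger {n n0 : ℕ} {u u' : Finset (List ℕ)}
    (hle : n0 ≤ n) (himg : u = u'.image (fun s => s.take n)) :
    u.image (fun s => s.take n0) = u'.image (fun s => s.take n0) := by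
  rw [himg, Finset.image_image]
  exact Finset.image_congr (fun s _ => (take_eq_take_take hle).symm)

lemma pstronger_base {γ : Ordinal.{u}} {n n' : ℕ} {u u' : Finset (List ℕ)}
    {h h' : List ℕ → List ℕ → ℕ}
    (ha : IsPApprox T n u h) (hγ : ¬ PRankGe T γ n u h)
    (hst : PStronger n u h n' u' h') :
    PStronger (nStar.{u} T n u h) (u.image (fun s => s.take (nStar.{u} T n u h)))
      (hInd h u (nStar.{u} T n u h)) n' u' h' := by
  obtain ⟨hq, hn0n⟩ := qlev_nStar ha hγ
  set n0 := nStar.{u} T n u h with hn0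
  have hinj : Set.InjOn (fun l : List ℕ => l.take n0) ↑u :=
    Finset.injOn_of_card_image_eq hq.2.2
  refine ⟨lt_of_le_of_lt hn0n hst.1, image_take_of_stronger hn0n hst.2.1, ?_⟩
  intro x' hx' y' hy' hne0
  have hxu : x'.take n ∈ u := hst.2.1 ▸ Finset.mem_image_of_mem _ hx'
  have hyu : y'.take n ∈ u := hst.2.1 ▸ Finset.mem_image_of_mem _ hy'
  have hpx : pickExt u n0 (x'.take n0) = x'.take n :=
    pickExt_eq_of_inj hinj hxu (take_eq_take_take hn0n).symm
  have hpy : pickExt u n0 (y'.take n0) = y'.take n :=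
    pickExt_eq_of_inj hinj hyu (take_eq_take_take hn0n).symm
  have hnen : x'.take n ≠ y'.take n := fun hc => hne0 (by
    rw [take_eq_take_take (l := x') hn0n, take_eq_take_take (l := y') hn0n, hc])
  show h (pickExt u n0 (x'.take n0)) (pickExt u n0 (y'.take n0)) = h' x' y'
  rw [hpx, hpy]
  exact hst.2.2 x' hx' y' hy' hnen

/-- (U₁') for `prank` and `crit`. -/
lemma prank_lt_of_crit_splits {γ : Ordinal.{u}} {n n' : ℕ} {u u' : Finset (List ℕ)}
    {h h' : List ℕ → List ℕ → ℕ}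
    (ha : IsPApprox T n u h) (ha' : IsPApprox T n' u' h')
    (hγ : ¬ PRankGe T γ n u h)
    (hst : PStronger n u h n' u' h')
    (hsp : PSplits (crit.{u} T n u h) n u') :
    prank.{u} T n' u' h' < prank.{u} T n u h := by
  classical
  obtain ⟨hcm, hct, hbb⟩ := crit_spec ha hγ
  obtain ⟨hq, hn0n⟩ := qlev_nStar ha hγ
  have hbad : BadP.{u} T (prank.{u} T n u h) (nStar.{u} T n u h)
      (u.image (fun s => s.take (nStar.{u} T n u h)))
      (hInd h u (nStar.{u} T n u h)) (pickIn (badFinset.{u} T n u h)) := by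
    have := (Finset.mem_filter.mp hbb).2
    simpa using this
  have hsp0 : PSplits (pickIn (badFinset.{u} T n u h)) (nStar.{u} T n u h) u' :=
    psplits_down hn0n hsp hct
  by_contra hc
  push_neg at hc
  exact hbad ⟨n', u', h', ha', pstronger_base ha hγ hst, hsp0,
    prankGe_mono hc (prankGe_prank n' u' h')⟩

/-- (U₂) for `prank` and `crit`. -/
lemma crit_prefix {γ : Ordinal.{u}} {n n' : ℕ} {u u' : Finset (List ℕ)}
    {h h' : List ℕ → List ℕ → ℕ}
    (ha : IsPApprox T n u h) (ha' : IsPApprox T n' u' h')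
    (hγ : ¬ PRankGe T γ n u h) (hγ' : ¬ PRankGe T γ n' u' h')
    (hst : PStronger n u h n' u' h')
    (hr : prank.{u} T n u h = prank.{u} T n' u' h')
    (hcard : u.card = u'.card) :
    crit.{u} T n u h <+: crit.{u} T n' u' h' := by
  classical
  -- (a) images agree below level n
  have himg0 : ∀ n0 ≤ n, u.image (fun s => s.take n0) = u'.image (fun s => s.take n0) :=
    fun n0 hle => image_take_of_stronger hle hst.2.1
  -- (b) induced colorings agree at levels with full cardinality
  have hagree : ∀ n0 ≤ n, (u.image (fun s => s.take n0)).card = u.card →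
      ∀ a ∈ u.image (fun s => s.take n0), ∀ b ∈ u.image (fun s => s.take n0),
        a ≠ b → hInd h u n0 a b = hInd h' u' n0 a b := by
    intro n0 hle hc0 a hau b hbu hab
    have hinj : Set.InjOn (fun l : List ℕ => l.take n0) ↑u :=
      Finset.injOn_of_card_image_eq hc0
    have hau' : a ∈ u'.image (fun s => s.take n0) := himg0 n0 hle ▸ hau
    have hbu' : b ∈ u'.image (fun s => s.take n0) := himg0 n0 hle ▸ hbu
    obtain ⟨sa, hsa, hsa'⟩ := Finset.mem_image.mp hau'
    obtain ⟨sb, hsb, hsb'⟩ := Finset.mem_image.mp hbu'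
    obtain ⟨hxm, hxt⟩ := pickExt_spec (u := u') (n0 := n0) (a := a) ⟨sa, hsa, hsa'⟩
    obtain ⟨hym, hyt⟩ := pickExt_spec (u := u') (n0 := n0) (a := b) ⟨sb, hsb, hsb'⟩
    set x' := pickExt u' n0 a
    set y' := pickExt u' n0 b
    have hxu : x'.take n ∈ u := hst.2.1 ▸ Finset.mem_image_of_mem _ hxm
    have hyu : y'.take n ∈ u := hst.2.1 ▸ Finset.mem_image_of_mem _ hym
    have hxta : (x'.take n).take n0 = a := by
      rw [← take_eq_take_take hle]; exact hxt
    have hytb : (y'.take n).take n0 = b := by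
      rw [← take_eq_take_take hle]; exact hyt
    have hpx : pickExt u n0 a = x'.take n := pickExt_eq_of_inj hinj hxu hxta
    have hpy : pickExt u n0 b = y'.take n := pickExt_eq_of_inj hinj hyu hytb
    have hnen : x'.take n ≠ y'.take n := fun hc => hab (by rw [← hxta, ← hytb, hc])
    show h (pickExt u n0 a) (pickExt u n0 b) = h' x' y'
    rw [hpx, hpy]
    exact hst.2.2 x' hxm y' hym hnen
  -- (c) qualifying levels agree below n
  have hql : ∀ n0 ≤ n, (QLev.{u} T n u h n0 ↔ QLev.{u} T n' u' h' n0) := by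
    intro n0 hle
    rw [QLev, QLev, ← hr, ← himg0 n0 hle, ← hcard]
    by_cases hc0 : (u.image (fun s => s.take n0)).card = u.card
    · constructor
      · rintro ⟨q1, q2, q3⟩
        refine ⟨prankGe_congr (hagree n0 hle hc0) q1, fun hc => q2 ?_, q3⟩
        exact prankGe_congr (fun a hau b hbu hab => (hagree n0 hle hc0 a hau b hbu hab).symm) hc
      · rintro ⟨q1, q2, q3⟩
        refine ⟨prankGe_congr (fun a hau b hbu hab =>
          (hagree n0 hle hc0 a hau b hbu hab).symm) q1, fun hc => q2 ?_, q3⟩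
        exact prankGe_congr (hagree n0 hle hc0) hc
    · exact ⟨fun q => absurd q.2.2 hc0, fun q => absurd q.2.2 hc0⟩
  -- (d) the least qualifying levels coincide
  have hq := qlev_nStar ha hγ
  have hq' := qlev_nStar ha' hγ'
  have hn0le : nStar.{u} T n u h ≤ n := hq.2
  have hqn0 : QLev.{u} T n u h (nStar.{u} T n u h) := hq.1
  have hqn' : n ∈ {m | QLev.{u} T n' u' h' m} := (hql n le_rfl).mp (qlev_self ha hγ)
  have hn'le : nStar.{u} T n' u' h' ≤ n := by
    rw [nStar]; exact Nat.sInf_le hqn'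
  have heq : nStar.{u} T n u h = nStar.{u} T n' u' h' := by
    apply le_antisymm
    · have hmem : nStar.{u} T n' u' h' ∈ {m | QLev.{u} T n u h m} :=
        (hql _ hn'le).mpr hq'.1
      conv_lhs => rw [nStar]
      exact Nat.sInf_le hmem
    · have hmem : nStar.{u} T n u h ∈ {m | QLev.{u} T n' u' h' m} :=
        (hql _ hn0le).mp hqn0
      conv_lhs => rw [nStar]
      exact Nat.sInf_le hmem
  -- (e) the bad sets coincide
  have hbfeq : badFinset.{u} T n u h = badFinset.{u} T n' u' h' := by
    rw [badFinset, badFinset, ← heq, ← himg0 _ hn0le, ← hr]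
    apply Finset.filter_congr
    intro p _
    simp only [BadP]
    apply not_congr
    constructor
    · rintro ⟨m, v, g, e1, e2, e3, e4⟩
      exact ⟨m, v, g, e1, pstronger_congr (hagree _ hn0le hqn0.2.2) e2, e3, e4⟩
    · rintro ⟨m, v, g, e1, e2, e3, e4⟩
      exact ⟨m, v, g, e1, pstronger_congr (fun a ha0 b hb0 hab =>
        (hagree _ hn0le hqn0.2.2 a ha0 b hb0 hab).symm) e2, e3, e4⟩
  -- (f) conclude
  obtain ⟨hcm', hct', hbb'⟩ := crit_spec ha' hγ'
  have hct0 : (crit.{u} T n' u' h').take (nStar.{u} T n u h) =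
      pickIn (badFinset.{u} T n u h) := by
    rw [heq, hbfeq]
    exact hct'
  have hcn : (crit.{u} T n' u' h').take n ∈ u :=
    hst.2.1 ▸ Finset.mem_image_of_mem _ hcm'
  have hinj : Set.InjOn (fun l : List ℕ => l.take (nStar.{u} T n u h)) ↑u :=
    Finset.injOn_of_card_image_eq hqn0.2.2
  have htt : ((crit.{u} T n' u' h').take n).take (nStar.{u} T n u h) =
      pickIn (badFinset.{u} T n u h) := by
    rw [← take_eq_take_take hn0le]; exact hct0
  have hkey : crit.{u} T n u h = (crit.{u} T n' u' h').take n := by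
    rw [crit]
    exact pickExt_eq_of_inj hinj hcn htt
  rw [hkey]
  exact List.take_prefix n _

end ACAux
/-- If `(T, r, c)` is a `γ`-ranked coloring tree then
`rk_T(u, h) ≤ r(u, h)` for every approximation `(u, h)` of `T`; conversely, if `T` is a
basic coloring tree with `rk(T) ≤ γ` then there exist `r` and `c` making `(T, r, c)`
a `γ`-ranked coloring tree. -/
theorem ranked_tree_bounds_rank
    (γ : Ordinal) (T : Set (List ℕ × List ℕ × ℕ)) (L : Set ℕ)
    (hT : AC.IsBasicTree T L) :
    (∀ r c, AC.IsRanked T γ r c →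
      ∀ n u h, AC.IsPApprox T n u h → ¬ AC.PRankGe T (Order.succ (r n u h)) n u h) ∧
    ((∀ n u h, AC.IsPApprox T n u h → ¬ AC.PRankGe T γ n u h) →
      ∃ r c, AC.IsRanked T γ r c) := by
  constructor
  · intro r c hrc
    have main : ∀ α n u h, AC.IsPApprox T n u h → r n u h = α →
        ¬ AC.PRankGe T (Order.succ α) n u h := by
      intro α
      induction α using Ordinal.induction with
      | h α IH =>
      intro n u h ha hr hge
      rw [ACAux.prankGe_iff] at hge
      obtain ⟨n', u', h', h1, h2, h3, h4⟩ :=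
        hge α (Order.lt_succ α) (c n u h) (hrc.c_mem n u h ha)
      have hlt : r n' u' h' < α := hr ▸ hrc.U1' n u h n' u' h' ha h1 h2 h3
      exact IH _ hlt n' u' h' h1 rfl
        (ACAux.prankGe_mono (Order.succ_le_of_lt hlt) h4)
    intro n u h ha
    exact main _ n u h ha rfl
  · intro H
    refine ⟨fun n u h => ACAux.prank T n u h, fun n u h => ACAux.crit T n u h, ?_⟩
    constructor
    · exact fun n u h ha => ACAux.prank_lt (H n u h ha)
    · exact fun n u h ha => (ACAux.crit_spec ha (H n u h ha)).1
    · exact fun n u h n' u' h' ha ha' hst =>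
        ACAux.le_prank_of_prankGe (H n u h ha)
          (ACAux.prankGe_of_stronger hst (ACAux.prankGe_prank n' u' h'))
    · exact fun n u h n' u' h' ha ha' hst hsp =>
        ACAux.prank_lt_of_crit_splits ha ha' (H n u h ha) hst hsp
    · exact fun n u h n' u' h' ha ha' hst hr hcard =>
        ACAux.crit_prefix ha ha' (H n u h ha) (H n' u' h' ha') hst hr hcard
    · intro n u h w ha hw h2
      have haw : AC.IsPApprox T n w h :=
        ⟨fun s hs => ha.len s (hw hs), h2,
          fun x hx y hy hxy => ha.mem x (hw hx) y (hw hy) hxy, ha.symm⟩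
      exact ACAux.le_prank_of_prankGe (H n w h haw)
        (ACAux.prankGe_subset _ hw (ACAux.prankGe_prank n u h))
end

section
/- Let X be a Borel subset of a Polish linear space and let N > 1. Then the N-defectedness coloring C = { S ∈ [X]^N : conv S ⊄ X } is analytic. -/
open Set Function MeasureTheory

/-- Membership in the convex hull of the range of a finite family as an explicit
convex combination over all indices. -/
lemma mem_convexHull_range_iff {E : Type*} [AddCommGroup E] [Module ℝ E]
    {N : ℕ} (f : Fin N → E) (x : E) :
    x ∈ convexHull ℝ (Set.range f) ↔
      ∃ w : Fin N → ℝ, (∀ i, 0 ≤ w i) ∧ (∑ i, w i = 1) ∧ ∑ i, w i • f i = x := by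
  classical
  constructor
  · intro hx
    rw [convexHull_range_eq_exists_affineCombination] at hx
    obtain ⟨s, w, hw0, hw1, hx⟩ := hx
    refine ⟨fun i => if i ∈ s then w i else 0,
      fun i => by dsimp only; split_ifs with hi; exacts [hw0 i hi, le_refl 0], ?_, ?_⟩
    · rw [Finset.sum_ite_mem, Finset.univ_inter, hw1]
    · rw [← hx, s.affineCombination_eq_linear_combination f w hw1]
      simp only [ite_smul, zero_smul]
      rw [Finset.sum_ite_mem, Finset.univ_inter]
  · rintro ⟨w, hw0, hw1, rfl⟩
    have := Finset.univ.centerMass_mem_convexHull (w := w) (z := f)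
      (fun i _ => hw0 i) (by rw [hw1]; norm_num) (fun i _ => Set.mem_range_self i)
    rwa [Finset.centerMass_eq_of_sum_1 _ _ hw1] at this

/-- Let `X` be a Borel subset of a Polish linear space `E` and `N > 1`.
Then the `N`-defectedness coloring `C = { S ∈ [X]^N : conv S ⊄ X }` (represented as the
set of injective `N`-tuples from `X` whose convex hull is not contained in `X`) is
analytic. -/
theorem defectedness_analytic
    {E : Type*} [TopologicalSpace E] [PolishSpace E]
    [AddCommGroup E] [Module ℝ E] [IsTopologicalAddGroup E] [ContinuousSMul ℝ E]
    [MeasurableSpace E] [BorelSpace E]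
    (X : Set E) (hX : MeasurableSet X) (N : ℕ) (hN : 1 < N) :
    MeasureTheory.AnalyticSet
      {f : Fin N → E | Function.Injective f ∧ Set.range f ⊆ X ∧
        ¬ convexHull ℝ (Set.range f) ⊆ X} := by
  classical
  set T : Set ((Fin N → E) × (Fin N → ℝ)) :=
    {p | Function.Injective p.1 ∧ (∀ i, p.1 i ∈ X) ∧ (∀ i, 0 ≤ p.2 i) ∧
      (∑ i, p.2 i = 1) ∧ (∑ i, p.2 i • p.1 i) ∉ X} with hT
  have h1 : MeasurableSet {p : (Fin N → E) × (Fin N → ℝ) | Function.Injective p.1} := by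
    have heq : {p : (Fin N → E) × (Fin N → ℝ) | Function.Injective p.1} =
        ⋂ i, ⋂ j, {p : (Fin N → E) × (Fin N → ℝ) | p.1 i = p.1 j → i = j} := by
      ext p; simp [Function.Injective]
    rw [heq]
    refine MeasurableSet.iInter fun i => MeasurableSet.iInter fun j => ?_
    by_cases hij : i = j
    · simp [hij]
    · have heq2 : {p : (Fin N → E) × (Fin N → ℝ) | p.1 i = p.1 j → i = j} =
          {p : (Fin N → E) × (Fin N → ℝ) | p.1 i = p.1 j}ᶜ := by
        ext p; simp [hij]
      rw [heq2]
      refine MeasurableSet.compl ?_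
      have hc : Continuous fun p : (Fin N → E) × (Fin N → ℝ) => (p.1 i, p.1 j) :=
        ((continuous_apply i).comp continuous_fst).prodMk
          ((continuous_apply j).comp continuous_fst)
      exact (isClosed_diagonal.preimage hc).measurableSet
  have h2 : MeasurableSet {p : (Fin N → E) × (Fin N → ℝ) | ∀ i, p.1 i ∈ X} := by
    have heq : {p : (Fin N → E) × (Fin N → ℝ) | ∀ i, p.1 i ∈ X} =
        ⋂ i, {p : (Fin N → E) × (Fin N → ℝ) | p.1 i ∈ X} := by ext p; simp
    rw [heq]
    exact MeasurableSet.iInter fun i =>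
      hX.preimage ((measurable_pi_apply i).comp measurable_fst)
  have h3 : MeasurableSet {p : (Fin N → E) × (Fin N → ℝ) | ∀ i, 0 ≤ p.2 i} := by
    have heq : {p : (Fin N → E) × (Fin N → ℝ) | ∀ i, 0 ≤ p.2 i} =
        ⋂ i, {p : (Fin N → E) × (Fin N → ℝ) | 0 ≤ p.2 i} := by ext p; simp
    rw [heq]
    exact MeasurableSet.iInter fun i =>
      measurableSet_le measurable_const
        ((measurable_pi_apply i).comp measurable_snd : Measurable fun p : (Fin N → E) × (Fin N → ℝ) => p.2 i)
  have h4 : MeasurableSet {p : (Fin N → E) × (Fin N → ℝ) | ∑ i, p.2 i = 1} := by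
    have hc : Continuous fun p : (Fin N → E) × (Fin N → ℝ) => ∑ i, p.2 i :=
      continuous_finset_sum _ fun i _ => (continuous_apply i).comp continuous_snd
    exact hc.measurable (measurableSet_singleton 1)
  have h5 : MeasurableSet {p : (Fin N → E) × (Fin N → ℝ) | (∑ i, p.2 i • p.1 i) ∉ X} := by
    have hc : Continuous fun p : (Fin N → E) × (Fin N → ℝ) => ∑ i, p.2 i • p.1 i :=
      continuous_finset_sum _ fun i _ =>
        ((continuous_apply i).comp continuous_snd).smul
          ((continuous_apply i).comp continuous_fst)
    exact hc.measurable hX.compl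
  have hTm : MeasurableSet T := h1.inter (h2.inter (h3.inter (h4.inter h5)))
  have hTa : MeasureTheory.AnalyticSet T := hTm.analyticSet
  have himg : Prod.fst '' T =
      {f : Fin N → E | Function.Injective f ∧ Set.range f ⊆ X ∧
        ¬ convexHull ℝ (Set.range f) ⊆ X} := by
    ext f
    simp only [Set.mem_image, Set.mem_setOf_eq, hT]
    constructor
    · rintro ⟨⟨g, w⟩, ⟨hinj, hmem, hw0, hw1, hnot⟩, rfl⟩
      refine ⟨hinj, Set.range_subset_iff.mpr hmem, fun hsub => hnot ?_⟩
      exact hsub ((mem_convexHull_range_iff g _).mpr ⟨w, hw0, hw1, rfl⟩)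
    · rintro ⟨hinj, hrange, hnsub⟩
      obtain ⟨x, hx, hxn⟩ := Set.not_subset.mp hnsub
      obtain ⟨w, hw0, hw1, hwx⟩ := (mem_convexHull_range_iff f x).mp hx
      exact ⟨(f, w), ⟨hinj, fun i => hrange (Set.mem_range_self i), hw0, hw1,
        by rw [hwx]; exact hxn⟩, rfl⟩
  rw [← himg]
  exact hTa.image_of_continuous continuous_fst
end

section
/- In ℝ^{2N−1}, if x₀ and x₁ are two distinct N-element affinely independent sets such that x₀ ∪ x₁ is affinely independent (equivalently, no 2N points of x₀ ∪ x₁ lie in a (2N−2)-dimensional affine subspace), then I(x₀) ∩ I(x₁) = ∅, where I(x) = (conv x) ∖ ⋃{ conv y : y ∈ [x]^{N−1} } is the relative interior part of the simplex conv x obtained by removing the convex hulls of all (N−1)-element subsets. -/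
/-- In `ℝ^{2N-1}`, if `x₀, x₁` are distinct `N`-element sets such that
`x₀ ∪ x₁` is affinely independent, then `I(x₀) ∩ I(x₁) = ∅`, where
`I(x) = conv x ∖ ⋃ { conv y : y ∈ [x]^{N-1} }`. -/
theorem interiors_disjoint_of_affineIndependent
    (N : ℕ) (hN : 1 < N)
    (x₀ x₁ : Finset (EuclideanSpace ℝ (Fin (2 * N - 1))))
    (h₀ : x₀.card = N) (h₁ : x₁.card = N) (hne : x₀ ≠ x₁)
    (hind : AffineIndependent ℝ
      (fun p : ((x₀ : Set (EuclideanSpace ℝ (Fin (2 * N - 1)))) ∪ ↑x₁ : Set _) =>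
        (p : EuclideanSpace ℝ (Fin (2 * N - 1))))) :
    (convexHull ℝ (x₀ : Set (EuclideanSpace ℝ (Fin (2 * N - 1)))) \
        ⋃ y ∈ {y : Finset (EuclideanSpace ℝ (Fin (2 * N - 1))) | y ⊆ x₀ ∧ y.card = N - 1},
          convexHull ℝ (y : Set (EuclideanSpace ℝ (Fin (2 * N - 1))))) ∩
      (convexHull ℝ (x₁ : Set (EuclideanSpace ℝ (Fin (2 * N - 1)))) \
        ⋃ y ∈ {y : Finset (EuclideanSpace ℝ (Fin (2 * N - 1))) | y ⊆ x₁ ∧ y.card = N - 1},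
          convexHull ℝ (y : Set (EuclideanSpace ℝ (Fin (2 * N - 1))))) = ∅ := by
  classical
  ext z
  simp only [Set.mem_inter_iff, Set.mem_diff, Set.mem_empty_iff_false, iff_false]
  rintro ⟨⟨hz₀, hz₀'⟩, hz₁, hz₁'⟩
  have hind' : AffineIndependent ℝ
      (fun p : ((x₀ ∪ x₁ : Finset _) : Set (EuclideanSpace ℝ (Fin (2 * N - 1)))) =>
        (p : EuclideanSpace ℝ (Fin (2 * N - 1)))) := by
    rw [Finset.coe_union]; exact hind
  have hz : z ∈ convexHull ℝ ((x₀ ∩ x₁ : Finset _) : Set (EuclideanSpace ℝ (Fin (2 * N - 1)))) := by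
    rw [Finset.coe_inter, hind'.convexHull_inter']; exact ⟨hz₀, hz₁⟩
  have hcard : (x₀ ∩ x₁).card ≤ N - 1 := by
    have hlt : (x₀ ∩ x₁).card < N := by
      rcases lt_or_eq_of_le (le_of_le_of_eq (Finset.card_le_card Finset.inter_subset_left) h₀)
        with h | h
      · exact h
      · have e₀ : x₀ ∩ x₁ = x₀ :=
          Finset.eq_of_subset_of_card_le Finset.inter_subset_left (by omega)
        have e₁ : x₀ ∩ x₁ = x₁ :=
          Finset.eq_of_subset_of_card_le Finset.inter_subset_right (by omega)
        exact absurd (e₀ ▸ e₁) hne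
    omega
  obtain ⟨y, hy₁, hy₂, hy₃⟩ := Finset.exists_subsuperset_card_eq
    (Finset.inter_subset_left : x₀ ∩ x₁ ⊆ x₀) hcard (by omega)
  exact hz₀' (Set.mem_iUnion₂.2 ⟨y, ⟨hy₂, hy₃⟩,
    convexHull_mono (Finset.coe_subset.2 hy₁) hz⟩)
end

section
/- Let N > 1 and let C ⊆ [2^ω]^N be an F_σ coloring of the Cantor set. Then there exists a G_δ set S ⊆ ℝ^{2N−1} and a topological embedding f : 2^ω → S with image X ⊆ S such that S ∖ X is a countable union of convex sets, and for every N-element subset T of X: conv T ⊄ S if and only if f^{-1}[T] ∈ C. -/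
noncomputable def mcurve (d : ℕ) (t : ℝ) : EuclideanSpace ℝ (Fin d) :=
  WithLp.toLp 2 (fun j => t ^ ((j : ℕ) + 1))

lemma mcurve_apply (d : ℕ) (t : ℝ) (j : Fin d) : mcurve d t j = t ^ ((j : ℕ) + 1) := rfl

lemma mcurve_continuous (d : ℕ) : Continuous (mcurve d) := by
  refine (PiLp.continuous_toLp 2 _).comp (continuous_pi ?_)
  intro j
  exact continuous_pow _

lemma vand (d : ℕ) (u : Finset ℝ) (hc : u.card ≤ d + 1) (w : ℝ → ℝ)
    (h0 : ∑ t ∈ u, w t = 0)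
    (h1 : ∑ t ∈ u, w t • mcurve d t = 0) :
    ∀ t ∈ u, w t = 0 := by
  have hk : ∀ k ≤ d, ∑ t ∈ u, w t * t ^ k = 0 := by
    intro k hkd
    rcases Nat.eq_zero_or_pos k with rfl | hkpos
    · simpa using h0
    · obtain ⟨j, hj⟩ : ∃ j : Fin d, (j : ℕ) + 1 = k :=
        ⟨⟨k - 1, by omega⟩, by simp; omega⟩
      have := congrArg (fun x => EuclideanSpace.proj j x) h1
      simp only [map_sum, map_smul, map_zero] at this
      rw [← hj]
      simpa [mcurve_apply, smul_eq_mul] using this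
  have hP : ∀ P : Polynomial ℝ, P.natDegree < d + 1 → ∑ t ∈ u, w t * P.eval t = 0 := by
    intro P hdeg
    have : ∀ t : ℝ, P.eval t = ∑ k ∈ Finset.range (d+1), P.coeff k * t ^ k := fun t =>
      Polynomial.eval_eq_sum_range' hdeg t
    simp_rw [this, Finset.mul_sum]
    rw [Finset.sum_comm]
    refine Finset.sum_eq_zero fun k hkmem => ?_
    have : ∑ t ∈ u, w t * (P.coeff k * t ^ k) = P.coeff k * ∑ t ∈ u, w t * t ^ k := by
      rw [Finset.mul_sum]; congr 1; ext t; ring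
    rw [this, hk k (by simpa using Nat.lt_succ_iff.mp (Finset.mem_range.mp hkmem)), mul_zero]
  intro t₀ ht₀
  have hinj : Set.InjOn (id : ℝ → ℝ) u := Function.injective_id.injOn
  have hdeg : (Lagrange.basis u id t₀).natDegree < d + 1 := by
    have := Lagrange.degree_basis hinj ht₀
    have h2 : (Lagrange.basis u id t₀).natDegree = u.card - 1 := by
      apply Polynomial.natDegree_eq_of_degree_eq_some
      simpa using this
    omega
  have := hP _ hdeg
  rw [Finset.sum_eq_single t₀] at this
  · have h2 := Lagrange.eval_basis_self hinj ht₀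
    simp only [id_eq] at h2 this
    rw [h2, mul_one] at this
    exact this
  · intro b hb hne
    rw [show (b : ℝ) = id b from rfl, Lagrange.eval_basis_of_ne (by simpa using hne.symm) hb]
    ring
  · intro h; exact absurd ht₀ h

lemma indicator_sum_smul (d : ℕ) (u₁ u : Finset ℝ) (h : u₁ ⊆ u) (w₁ : ℝ → ℝ) :
    ∑ t ∈ u, Set.indicator ↑u₁ w₁ t • mcurve d t = ∑ t ∈ u₁, w₁ t • mcurve d t := by
  rw [← Finset.sum_subset h]
  · apply Finset.sum_congr rfl
    intro t ht
    rw [Set.indicator_of_mem (by exact_mod_cast ht) w₁]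
  · intro t _ ht
    rw [Set.indicator_of_notMem (by exact_mod_cast ht) w₁, zero_smul]

lemma indicator_sum (u₁ u : Finset ℝ) (h : u₁ ⊆ u) (w₁ : ℝ → ℝ) :
    ∑ t ∈ u, Set.indicator ↑u₁ w₁ t = ∑ t ∈ u₁, w₁ t := by
  rw [← Finset.sum_subset h]
  · apply Finset.sum_congr rfl
    intro t ht
    rw [Set.indicator_of_mem (by exact_mod_cast ht) w₁]
  · intro t _ ht
    rw [Set.indicator_of_notMem (by exact_mod_cast ht) w₁]

lemma unique_comb (d : ℕ) (u₁ u₂ : Finset ℝ) (hc : (u₁ ∪ u₂).card ≤ d + 1)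
    (w₁ w₂ : ℝ → ℝ) (hs₁ : ∑ t ∈ u₁, w₁ t = 1) (hs₂ : ∑ t ∈ u₂, w₂ t = 1)
    (heq : ∑ t ∈ u₁, w₁ t • mcurve d t = ∑ t ∈ u₂, w₂ t • mcurve d t) :
    ∀ t : ℝ, Set.indicator ↑u₁ w₁ t = Set.indicator ↑u₂ w₂ t := by
  set u := u₁ ∪ u₂ with hu
  have h₁ : u₁ ⊆ u := Finset.subset_union_left
  have h₂ : u₂ ⊆ u := Finset.subset_union_right
  have key := vand d u hc (fun t => Set.indicator ↑u₁ w₁ t - Set.indicator ↑u₂ w₂ t)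
    (by rw [Finset.sum_sub_distrib, indicator_sum u₁ u h₁, indicator_sum u₂ u h₂, hs₁, hs₂]; ring)
    (by
      have : ∀ t ∈ u, (Set.indicator ↑u₁ w₁ t - Set.indicator ↑u₂ w₂ t) • mcurve d t
          = Set.indicator ↑u₁ w₁ t • mcurve d t - Set.indicator ↑u₂ w₂ t • mcurve d t := by
        intro t _; rw [sub_smul]
      rw [Finset.sum_congr rfl this, Finset.sum_sub_distrib,
        indicator_sum_smul d u₁ u h₁, indicator_sum_smul d u₂ u h₂, heq, sub_self])
  intro t
  by_cases ht : t ∈ u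
  · have h := key t ht
    linarith
  · rw [Set.indicator_of_notMem (fun hmem => ht (by exact_mod_cast (Finset.mem_union_left u₂ (by exact_mod_cast hmem)))) w₁,
      Set.indicator_of_notMem (fun hmem => ht (by exact_mod_cast (Finset.mem_union_right u₁ (by exact_mod_cast hmem)))) w₂]

noncomputable def cphi (x : ℕ → Bool) : ℝ := ∑' n, (if x n then (2:ℝ) else 0) / 3 ^ (n + 1)

lemma cterm_nonneg (x : ℕ → Bool) (n : ℕ) : 0 ≤ (if x n then (2:ℝ) else 0) / 3 ^ (n + 1) := by
  positivity

lemma cterm_le (x : ℕ → Bool) (n : ℕ) : (if x n then (2:ℝ) else 0) / 3 ^ (n + 1) ≤ 2 / 3 ^ (n + 1) := by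
  gcongr
  split_ifs <;> norm_num

lemma geo_summable : Summable (fun n : ℕ => (2:ℝ) / 3 ^ (n + 1)) := by
  have h : (fun n : ℕ => (2:ℝ) / 3 ^ (n + 1)) = fun n => (2/3) * (1/3 : ℝ) ^ n := by
    funext n
    rw [one_div, inv_pow, pow_succ]
    field_simp
  rw [h]
  exact (summable_geometric_of_lt_one (by norm_num) (by norm_num)).mul_left _

lemma csummable (x : ℕ → Bool) : Summable (fun n => (if x n then (2:ℝ) else 0) / 3 ^ (n + 1)) := by
  apply Summable.of_nonneg_of_le (cterm_nonneg x) (cterm_le x) geo_summable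

lemma ctail_bound (x : ℕ → Bool) (n : ℕ) :
    ∑' k, (if x (k + (n+1)) then (2:ℝ) else 0) / 3 ^ ((k + (n+1)) + 1) ≤ 1 / 3 ^ (n + 1) := by
  have hsum : Summable (fun k => (if x (k + (n+1)) then (2:ℝ) else 0) / 3 ^ ((k + (n+1)) + 1)) :=
    (csummable x).comp_injective (add_left_injective (n+1))
  have hb : Summable (fun k : ℕ => (2:ℝ) / 3 ^ ((k + (n+1)) + 1)) :=
    geo_summable.comp_injective (add_left_injective (n+1))
  calc ∑' k, (if x (k + (n+1)) then (2:ℝ) else 0) / 3 ^ ((k + (n+1)) + 1)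
      ≤ ∑' k, (2:ℝ) / 3 ^ ((k + (n+1)) + 1) :=
        Summable.tsum_le_tsum (fun k => cterm_le x _) hsum hb
    _ = ∑' k, ((2:ℝ) / 3 ^ (n + 2)) * (1/3) ^ k := by
        congr 1; funext k
        rw [one_div, inv_pow]
        rw [show k + (n+1) + 1 = (n+2) + k by ring, pow_add]
        field_simp
    _ = ((2:ℝ) / 3 ^ (n + 2)) * (1 - 1/3)⁻¹ := by
        rw [tsum_mul_left, tsum_geometric_of_lt_one (by norm_num) (by norm_num)]
    _ = 1 / 3 ^ (n + 1) := by
        rw [show (3:ℝ) ^ (n+2) = 3 ^ (n+1) * 3 by rw [pow_succ]]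
        norm_num
        ring

lemma cphi_continuous : Continuous cphi := by
  apply continuous_tsum
  · intro n
    have : Continuous fun b : Bool => (if b then (2:ℝ) else 0) / 3 ^ (n + 1) :=
      continuous_of_discreteTopology
    exact this.comp (continuous_apply n)
  · exact geo_summable
  · intro n x
    rw [Real.norm_eq_abs, abs_of_nonneg (cterm_nonneg x n)]
    exact cterm_le x n

lemma cphi_split (x : ℕ → Bool) (n : ℕ) :
    cphi x = (∑ k ∈ Finset.range (n+1), (if x k then (2:ℝ) else 0) / 3 ^ (k+1))
      + ∑' k, (if x (k + (n+1)) then (2:ℝ) else 0) / 3 ^ ((k + (n+1)) + 1) :=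
  ((csummable x).sum_add_tsum_nat_add (n+1)).symm

lemma cphi_aux (x y : ℕ → Bool) (n : ℕ) (hxy : cphi x = cphi y)
    (hx : x n = true) (hy : y n = false) (hlt : ∀ k < n, x k = y k) : False := by
  have hTx : 0 ≤ ∑' k, (if x (k + (n+1)) then (2:ℝ) else 0) / 3 ^ ((k + (n+1)) + 1) :=
    tsum_nonneg fun k => cterm_nonneg x _
  have hTy : ∑' k, (if y (k + (n+1)) then (2:ℝ) else 0) / 3 ^ ((k + (n+1)) + 1) ≤ 1 / 3 ^ (n+1) :=
    ctail_bound y n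
  have hS : ∑ k ∈ Finset.range (n+1), (if x k then (2:ℝ) else 0) / 3 ^ (k+1)
      = (∑ k ∈ Finset.range (n+1), (if y k then (2:ℝ) else 0) / 3 ^ (k+1)) + 2 / 3 ^ (n+1) := by
    rw [Finset.sum_range_succ, Finset.sum_range_succ, hx, hy]
    rw [Finset.sum_congr rfl fun k hk => by rw [hlt k (Finset.mem_range.mp hk)]]
    simp
  have h1 := cphi_split x n
  have h2 := cphi_split y n
  rw [hxy] at h1
  rw [h2] at h1
  have hpow : (0:ℝ) < 1 / 3 ^ (n+1) := by positivity
  have h3 : (2:ℝ) / 3 ^ (n+1) = 2 * (1 / 3 ^ (n+1)) := by ring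
  linarith

lemma cphi_injective : Function.Injective cphi := by
  intro x y hxy
  by_contra hne
  have hex : ∃ n, x n ≠ y n := by
    by_contra h
    push_neg at h
    exact hne (funext h)
  classical
  set n := Nat.find hex with hndef
  have hn : x n ≠ y n := Nat.find_spec hex
  have hlt : ∀ k < n, x k = y k := fun k hk => by
    by_contra h
    have : n ≤ k := Nat.find_le h
    omega
  cases hxn : x n <;> cases hyn : y n
  · rw [hxn, hyn] at hn; exact hn rfl
  · exact cphi_aux y x n hxy.symm hyn hxn (fun k hk => (hlt k hk).symm)
  · exact cphi_aux x y n hxy hxn hyn hlt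
  · rw [hxn, hyn] at hn; exact hn rfl

lemma support_sub (d : ℕ) (u₁ u₂ : Finset ℝ) (hc : u₁.card + u₂.card ≤ d + 1)
    (W₁ W₂ : ℝ → ℝ) (hpos : ∀ t ∈ u₁, 0 < W₁ t)
    (hs₁ : ∑ t ∈ u₁, W₁ t = 1) (hs₂ : ∑ t ∈ u₂, W₂ t = 1)
    (heq : ∑ t ∈ u₁, W₁ t • mcurve d t = ∑ t ∈ u₂, W₂ t • mcurve d t) :
    u₁ ⊆ u₂ := by
  have hind := unique_comb d u₁ u₂ (le_trans (Finset.card_union_le u₁ u₂) hc) W₁ W₂ hs₁ hs₂ heq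
  intro t ht
  by_contra ht₂
  have h1 := hind t
  rw [Set.indicator_of_mem (by exact_mod_cast ht) W₁,
    Set.indicator_of_notMem (by exact_mod_cast ht₂) W₂] at h1
  exact absurd h1 (ne_of_gt (hpos t ht))

lemma hull_repr {N d : ℕ} (c : Fin N → ℝ) (hcinj : Function.Injective c)
    {y : EuclideanSpace ℝ (Fin d)}
    (hy : y ∈ convexHull ℝ (Set.range (fun i => mcurve d (c i)))) :
    ∃ (u : Finset ℝ) (W : ℝ → ℝ), u ⊆ Finset.univ.image c ∧ (∀ t ∈ u, 0 ≤ W t) ∧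
      (∑ t ∈ u, W t = 1) ∧ ∑ t ∈ u, W t • mcurve d t = y := by
  rw [convexHull_range_eq_exists_affineCombination] at hy
  obtain ⟨s, w, hw₀, hw₁, hw⟩ := hy
  have hsne : s.Nonempty := by
    rcases Finset.eq_empty_or_nonempty s with rfl | h
    · simp at hw₁
    · exact h
  have : Nonempty (Fin N) := ⟨hsne.choose⟩
  refine ⟨s.image c, fun t => w (Function.invFun c t), ?_, ?_, ?_, ?_⟩
  · exact Finset.image_subset_image (Finset.subset_univ s)
  · intro t ht
    obtain ⟨i, hi, rfl⟩ := Finset.mem_image.mp ht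
    simpa [Function.leftInverse_invFun hcinj i] using hw₀ i hi
  · rw [Finset.sum_image (fun a _ b _ h => hcinj h)]
    rw [Finset.sum_congr rfl fun i _ => congrArg w (Function.leftInverse_invFun hcinj i)]
    exact hw₁
  · rw [Finset.sum_image (fun a _ b _ h => hcinj h)]
    have : ∀ i ∈ s, w (Function.invFun c (c i)) • mcurve d (c i) = w i • mcurve d (c i) := by
      intro i _
      rw [Function.leftInverse_invFun hcinj i]
    rw [Finset.sum_congr rfl this, ← Finset.affineCombination_eq_linear_combination s _ _ hw₁]
    exact hw

lemma open_eq_iUnion_convex {E : Type*} [NormedAddCommGroup E] [NormedSpace ℝ E]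
    [TopologicalSpace.SeparableSpace E] (V : Set E) (hV : IsOpen V) :
    ∃ A : ℕ → Set E, (∀ n, Convex ℝ (A n)) ∧ V = ⋃ n, A n := by
  classical
  let c := TopologicalSpace.denseSeq E
  let B : ℕ × ℕ → Set E := fun q =>
    if Metric.ball (c q.1) (1/(q.2+1)) ⊆ V then Metric.ball (c q.1) (1/(q.2+1)) else ∅
  have hBconv : ∀ q, Convex ℝ (B q) := by
    intro q
    simp only [B]
    split_ifs
    · exact convex_ball _ _
    · exact convex_empty
  have hBV : ∀ q, B q ⊆ V := by
    intro q
    simp only [B]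
    split_ifs with h
    · exact h
    · exact Set.empty_subset V
  have hcover : V = ⋃ q, B q := by
    apply Set.Subset.antisymm
    · intro y hy
      obtain ⟨ε, hε, hball⟩ := Metric.isOpen_iff.mp hV y hy
      obtain ⟨j, hj⟩ := exists_nat_one_div_lt (half_pos hε)
      have hj' : (1:ℝ)/(j+1) < ε/2 := hj
      obtain ⟨i, hi⟩ := (TopologicalSpace.denseRange_denseSeq E).exists_dist_lt y
        (by positivity : (0:ℝ) < 1/(j+1))
      have hsub : Metric.ball (c i) (1/(j+1)) ⊆ V := by
        intro z hz
        apply hball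
        rw [Metric.mem_ball] at hz ⊢
        have := dist_triangle z (c i) y
        rw [dist_comm (c i) y] at this
        linarith
      refine Set.mem_iUnion.mpr ⟨(i, j), ?_⟩
      simp only [B, if_pos hsub]
      rw [Metric.mem_ball]
      exact hi
    · exact Set.iUnion_subset hBV
  refine ⟨fun n => B ((Denumerable.eqv (ℕ × ℕ)).symm n), fun n => hBconv _, ?_⟩
  rw [hcover]
  exact ((Denumerable.eqv (ℕ × ℕ)).symm.surjective.iUnion_comp B).symm

noncomputable def epsn (n : ℕ) : ℝ := 1/(n+2)

lemma epsn_pos (n : ℕ) : 0 < epsn n := by unfold epsn; positivity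

lemma epsn_le (n : ℕ) : epsn n ≤ 1/2 := by
  unfold epsn
  rw [div_le_div_iff₀ (by positivity) (by norm_num)]
  push_cast
  linarith

noncomputable def wtn (N n : ℕ) (i : Fin N) : ℝ :=
  epsn n / N + if (i : ℕ) = 0 then 1 - epsn n else 0

lemma wtn_pos {N : ℕ} (hN : 1 < N) (n : ℕ) (i : Fin N) : 0 < wtn N n i := by
  unfold wtn
  have h1 : 0 < epsn n / N := div_pos (epsn_pos n) (by positivity)
  have h2 := epsn_le n
  split_ifs <;> linarith

lemma wtn_sum {N : ℕ} (hN : 1 < N) (n : ℕ) : ∑ i : Fin N, wtn N n i = 1 := by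
  unfold wtn
  rw [Finset.sum_add_distrib, Finset.sum_const, Finset.card_univ, Fintype.card_fin]
  have h0 : ∑ i : Fin N, (if (i : ℕ) = 0 then 1 - epsn n else 0) = 1 - epsn n := by
    rw [Finset.sum_eq_single (⟨0, by omega⟩ : Fin N)]
    · simp
    · intro b _ hb
      rw [if_neg]
      intro hb0
      exact hb (Fin.ext hb0)
    · intro h
      exact absurd (Finset.mem_univ _) h
  rw [h0]
  have hNne : (N:ℝ) ≠ 0 := by positivity
  rw [nsmul_eq_mul]
  field_simp
  ring

/-- Let `N > 1` and let `C ⊆ [2^ω]^N` be an `F_σ` coloring of the Cantor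
set (represented as a symmetric `F_σ` set of injective `N`-tuples).  Then there are a
`G_δ` set `S ⊆ ℝ^{2N-1}` and a topological embedding `f : 2^ω → ℝ^{2N-1}` with image
`X ⊆ S` such that `S ∖ X` is a countable union of convex sets and, for every
`N`-element subset `T` of `X`, `conv T ⊄ S` iff `f⁻¹[T] ∈ C`. -/
theorem Fsigma_coloring_realized_as_defectedness
    (N : ℕ) (hN : 1 < N)
    (C : Set (Fin N → (ℕ → Bool)))
    (Cn : ℕ → Set (Fin N → (ℕ → Bool)))
    (hcl : ∀ n, IsClosed (Cn n)) (hU : C = ⋃ n, Cn n)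
    (hinj : ∀ v ∈ C, Function.Injective v)
    (hsym : ∀ v ∈ C, ∀ σ : Equiv.Perm (Fin N), v ∘ σ ∈ C) :
    ∃ (S : Set (EuclideanSpace ℝ (Fin (2 * N - 1))))
      (f : (ℕ → Bool) → EuclideanSpace ℝ (Fin (2 * N - 1))),
      IsGδ S ∧ Topology.IsEmbedding f ∧ Set.range f ⊆ S ∧
      (∃ A : ℕ → Set (EuclideanSpace ℝ (Fin (2 * N - 1))),
        (∀ n, Convex ℝ (A n)) ∧ S \ Set.range f = ⋃ n, A n) ∧
      ∀ v : Fin N → (ℕ → Bool), Function.Injective v →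
        (¬ convexHull ℝ (Set.range (f ∘ v)) ⊆ S ↔ v ∈ C) := by
  classical
  set d := 2 * N - 1 with hddef
  have hd1 : d + 1 = 2 * N := by omega
  have hNpos : 0 < N := by omega
  have hNe : Nonempty (Fin N) := ⟨⟨0, hNpos⟩⟩
  set i0 : Fin N := ⟨0, hNpos⟩ with hi0def
  set f : (ℕ → Bool) → EuclideanSpace ℝ (Fin d) := fun x => mcurve d (cphi x) with hfdef
  have hfcont : Continuous f := (mcurve_continuous d).comp cphi_continuous
  have hmcinj : Function.Injective (mcurve d) := by
    intro a b h
    have hj : (0:ℕ) < d := by omega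
    have := congrArg (fun z => EuclideanSpace.proj (⟨0, hj⟩ : Fin d) z) h
    simpa [mcurve_apply] using this
  have hfinj : Function.Injective f := fun a b h => cphi_injective (hmcinj h)
  have hfemb : Topology.IsEmbedding f := (hfcont.isClosedEmbedding hfinj).toIsEmbedding
  set F : Set (EuclideanSpace ℝ (Fin d)) := Set.range f with hFdef
  have hFcomp : IsCompact F := isCompact_range hfcont
  have hFclosed : IsClosed F := hFcomp.isClosed
  have hFne : F.Nonempty := ⟨f (fun _ => false), Set.mem_range_self _⟩
  set mark : ℕ → (Fin N → ℕ → Bool) → EuclideanSpace ℝ (Fin d) :=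
    fun n v => ∑ i, wtn N n i • f (v i) with hmarkdef
  have hmarkcont : ∀ n, Continuous (mark n) := by
    intro n
    apply continuous_finset_sum
    intro i _
    exact (hfcont.comp (continuous_apply i : Continuous fun p : Fin N → ℕ → Bool => p i)).const_smul (wtn N n i)
  set P : ℕ → Set (EuclideanSpace ℝ (Fin d)) := fun n => mark n '' (Cn n) with hPdef
  have hPcomp : ∀ n, IsCompact (P n) :=
    fun n => (((hcl n).isCompact)).image (hmarkcont n)
  set D : Set (EuclideanSpace ℝ (Fin d)) := ⋃ n, P n with hDdef
  -- mark is a convex combination, hence in the hull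
  have hmark_mem : ∀ n (v : Fin N → ℕ → Bool),
      mark n v ∈ convexHull ℝ (Set.range (f ∘ v)) := by
    intro n v
    have hsum := wtn_sum hN n
    have h1 : Finset.univ.centerMass (wtn N n) (fun i => f (v i)) = ∑ i, wtn N n i • f (v i) :=
      Finset.univ.centerMass_eq_of_sum_1 _ hsum
    rw [hmarkdef]
    simp only [← h1]
    exact Finset.centerMass_mem_convexHull _ (fun i _ => (wtn_pos hN n i).le)
      (by rw [hsum]; norm_num) (fun i _ => Set.mem_range_self i)
  -- representation of mark over the Finset ℝ of parameters
  have hmark_repr : ∀ n (v : Fin N → ℕ → Bool), Function.Injective v →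
      ∃ (u₁ : Finset ℝ) (W₁ : ℝ → ℝ), u₁ = Finset.univ.image (fun i => cphi (v i)) ∧
        (∀ t ∈ u₁, 0 < W₁ t) ∧ (∑ t ∈ u₁, W₁ t = 1) ∧
        (∑ t ∈ u₁, W₁ t • mcurve d t = mark n v) := by
    intro n v hv
    set c : Fin N → ℝ := fun i => cphi (v i) with hcdef
    have hcinj : Function.Injective c := fun a b h => hv (cphi_injective h)
    refine ⟨Finset.univ.image c, fun t => wtn N n (Function.invFun c t), rfl, ?_, ?_, ?_⟩
    · intro t _
      exact wtn_pos hN n _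
    · rw [Finset.sum_image (fun a _ b _ h => hcinj h)]
      rw [Finset.sum_congr rfl fun i _ =>
        congrArg (wtn N n) (Function.leftInverse_invFun hcinj i)]
      exact wtn_sum hN n
    · rw [Finset.sum_image (fun a _ b _ h => hcinj h)]
      rw [hmarkdef]
      apply Finset.sum_congr rfl
      intro i _
      simp only [Function.leftInverse_invFun hcinj i]
      rfl
  -- mark points are never on the curve
  have hmark_notF : ∀ n (v : Fin N → ℕ → Bool), Function.Injective v → mark n v ∉ F := by
    intro n v hv hmF
    obtain ⟨x, hx⟩ := hmF
    obtain ⟨u₁, W₁, hu₁, hpos, hs₁, heq⟩ := hmark_repr n v hv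
    have hcardu₁ : u₁.card = N := by
      rw [hu₁, Finset.card_image_of_injective _ (fun a b h => hv (cphi_injective h)),
        Finset.card_univ, Fintype.card_fin]
    have hsub : u₁ ⊆ {cphi x} := by
      apply support_sub d u₁ {cphi x} (by rw [hcardu₁]; simp; omega) W₁ (fun _ => 1) hpos hs₁
      · simp
      · rw [heq, Finset.sum_singleton, one_smul, ← hx, hfdef]
    have := Finset.card_le_card hsub
    rw [hcardu₁, Finset.card_singleton] at this
    omega
  -- a curve point in a hull must be one of the vertices
  have hcurve_hull : ∀ (x : ℕ → Bool) (v : Fin N → ℕ → Bool), Function.Injective v →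
      f x ∈ convexHull ℝ (Set.range (f ∘ v)) → x ∈ Set.range v := by
    intro x v hv hmem
    set c : Fin N → ℝ := fun i => cphi (v i) with hcdef
    have hcinj : Function.Injective c := fun a b h => hv (cphi_injective h)
    have hmem' : f x ∈ convexHull ℝ (Set.range (fun i => mcurve d (c i))) := by
      have : Set.range (f ∘ v) = Set.range (fun i => mcurve d (c i)) := by
        rw [hfdef]; rfl
      rwa [this] at hmem
    obtain ⟨u, W, husub, hnn, hs, hequ⟩ := hull_repr c hcinj hmem'
    have hsub : ({cphi x} : Finset ℝ) ⊆ u := by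
      apply support_sub d {cphi x} u ?_ (fun _ => 1) W (by simp) (by simp) hs
      · rw [Finset.sum_singleton, one_smul, hequ, hfdef]
      · have : u.card ≤ N := le_trans (Finset.card_le_card husub)
          (le_trans (Finset.card_image_le) (by simp))
        simp only [Finset.card_singleton]
        omega
    have hmemu : cphi x ∈ u := hsub (Finset.mem_singleton_self _)
    have := husub hmemu
    obtain ⟨i, _, hi⟩ := Finset.mem_image.mp this
    exact ⟨i, cphi_injective hi⟩
  -- a mark point of w in the hull of v forces equal ranges
  have hmark_hull : ∀ n (w v : Fin N → ℕ → Bool), Function.Injective w →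
      Function.Injective v → mark n w ∈ convexHull ℝ (Set.range (f ∘ v)) →
      Set.range w = Set.range v := by
    intro n w v hw hv hmem
    set cw : Fin N → ℝ := fun i => cphi (w i) with hcwdef
    set cv : Fin N → ℝ := fun i => cphi (v i) with hcvdef
    have hcwinj : Function.Injective cw := fun a b h => hw (cphi_injective h)
    have hcvinj : Function.Injective cv := fun a b h => hv (cphi_injective h)
    obtain ⟨u₁, W₁, hu₁, hpos, hs₁, heq₁⟩ := hmark_repr n w hw
    have hmem' : mark n w ∈ convexHull ℝ (Set.range (fun i => mcurve d (cv i))) := by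
      have : Set.range (f ∘ v) = Set.range (fun i => mcurve d (cv i)) := by
        rw [hfdef]; rfl
      rwa [this] at hmem
    obtain ⟨u₂, W₂, husub, hnn, hs₂, hequ⟩ := hull_repr cv hcvinj hmem'
    have hcardu₁ : u₁.card = N := by
      rw [hu₁, Finset.card_image_of_injective _ hcwinj, Finset.card_univ, Fintype.card_fin]
    have hcardu₂ : u₂.card ≤ N := le_trans (Finset.card_le_card husub)
      (le_trans (Finset.card_image_le) (by simp))
    have hsub : u₁ ⊆ u₂ :=
      support_sub d u₁ u₂ (by omega) W₁ W₂ hpos hs₁ hs₂ (by rw [heq₁, hequ])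
    have hcardim : (Finset.univ.image cv).card = N := by
      rw [Finset.card_image_of_injective _ hcvinj, Finset.card_univ, Fintype.card_fin]
    have hu₁eq : u₁ = Finset.univ.image cv := by
      apply Finset.eq_of_subset_of_card_le (hsub.trans husub)
      rw [hcardim, hcardu₁]
    apply Set.Subset.antisymm
    · rintro _ ⟨i, rfl⟩
      have : cw i ∈ Finset.univ.image cv := by
        rw [← hu₁eq, hu₁]
        exact Finset.mem_image_of_mem _ (Finset.mem_univ i)
      obtain ⟨j, _, hj⟩ := Finset.mem_image.mp this
      exact ⟨j, cphi_injective hj⟩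
    · rintro _ ⟨j, rfl⟩
      have : cv j ∈ u₁ := by
        rw [hu₁eq]
        exact Finset.mem_image_of_mem _ (Finset.mem_univ j)
      rw [hu₁] at this
      obtain ⟨i, _, hi⟩ := Finset.mem_image.mp this
      exact ⟨i, cphi_injective hi⟩
  -- closedness of F ∪ D
  have hest : ∃ R : ℝ, 0 ≤ R ∧ ∀ n (v : Fin N → ℕ → Bool),
      dist (mark n v) (f (v i0)) ≤ 2 * R * epsn n := by
    obtain ⟨R₀, hR₀⟩ := hFcomp.isBounded.exists_norm_le
    refine ⟨max R₀ 0, le_max_right _ _, ?_⟩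
    set R := max R₀ 0 with hRdef
    have hRb : ∀ z ∈ F, ‖z‖ ≤ R := fun z hz => (hR₀ z hz).trans (le_max_left _ _)
    intro n v
    have hkey : mark n v - f (v i0) = ∑ i, wtn N n i • (f (v i) - f (v i0)) := by
      rw [hmarkdef]
      simp only [smul_sub, Finset.sum_sub_distrib, ← Finset.sum_smul, wtn_sum hN n, one_smul]
    rw [dist_eq_norm, hkey]
    have hterm : ∀ i : Fin N, ‖wtn N n i • (f (v i) - f (v i0))‖
        ≤ (if (i : ℕ) = 0 then 0 else epsn n / N * (2 * R)) := by
      intro i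
      rw [norm_smul, Real.norm_eq_abs, abs_of_pos (wtn_pos hN n i)]
      split_ifs with h0
      · have : i = i0 := Fin.ext h0
        rw [this, sub_self, norm_zero, mul_zero]
      · have hwt : wtn N n i = epsn n / N := by
          rw [wtn]
          rw [if_neg h0, add_zero]
        have hnm : ‖f (v i) - f (v i0)‖ ≤ 2 * R := by
          have h1 := hRb (f (v i)) (Set.mem_range_self _)
          have h2 := hRb (f (v i0)) (Set.mem_range_self _)
          calc ‖f (v i) - f (v i0)‖ ≤ ‖f (v i)‖ + ‖f (v i0)‖ := norm_sub_le _ _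
            _ ≤ 2 * R := by linarith
        rw [hwt]
        apply mul_le_mul_of_nonneg_left hnm
        exact div_nonneg (epsn_pos n).le (Nat.cast_nonneg N)
    calc ‖∑ i, wtn N n i • (f (v i) - f (v i0))‖
        ≤ ∑ i, ‖wtn N n i • (f (v i) - f (v i0))‖ := norm_sum_le _ _
      _ ≤ ∑ i : Fin N, (if (i : ℕ) = 0 then 0 else epsn n / N * (2 * R)) :=
          Finset.sum_le_sum fun i _ => hterm i
      _ ≤ ∑ _i : Fin N, epsn n / N * (2 * R) := by
          apply Finset.sum_le_sum
          intro i _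
          split_ifs
          · have hR0 : (0:ℝ) ≤ R := by rw [hRdef]; exact le_max_right _ _
            exact mul_nonneg (div_nonneg (epsn_pos n).le (Nat.cast_nonneg N)) (by linarith)
          · exact le_refl _
      _ = N * (epsn n / N * (2 * R)) := by
          rw [Finset.sum_const, Finset.card_univ, Fintype.card_fin, nsmul_eq_mul]
      _ = 2 * R * epsn n := by
          have hNne : (N : ℝ) ≠ 0 := by positivity
          field_simp
  obtain ⟨R, hRnn, hest⟩ := hest
  have hFD_closed : IsClosed (F ∪ D) := by
    have hclD : closure D ⊆ F ∪ D := by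
      intro y hy
      by_cases hyF : y ∈ F
      · exact Or.inl hyF
      by_cases hyD : y ∈ D
      · exact Or.inr hyD
      exfalso
      have hδ : 0 < Metric.infDist y F :=
        (hFclosed.notMem_iff_infDist_pos hFne).mp hyF
      set δ := Metric.infDist y F with hδdef
      obtain ⟨n₀, hn₀⟩ := exists_nat_one_div_lt
        (div_pos hδ (show (0:ℝ) < 2 * R + 1 by linarith))
      set β : ℝ := (2 * R + 1) * (1 / ((n₀ : ℝ) + 1)) with hβdef
      have hβδ : β < δ := by
        rw [hβdef]
        rw [lt_div_iff₀ (show (0:ℝ) < 2 * R + 1 by linarith)] at hn₀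
        linarith [hn₀]
      have hclaim : ∀ n, n₀ ≤ n → ∀ z ∈ P n, Metric.infDist z F ≤ β := by
        intro n hn z hz
        obtain ⟨v, _, hv⟩ := hz
        have h1 : Metric.infDist z F ≤ dist z (f (v i0)) :=
          Metric.infDist_le_dist_of_mem (Set.mem_range_self _)
        have h2 := hest n v
        rw [hv] at h2
        have h3 : 2 * R * epsn n ≤ β := by
          rw [hβdef]
          have he1 : epsn n ≤ 1 / ((n₀ : ℝ) + 1) := by
            rw [epsn]
            apply div_le_div_of_nonneg_left (by norm_num) (by positivity)
            push_cast
            have : (n₀ : ℝ) ≤ n := by exact_mod_cast hn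
            linarith
          have he2 : 0 < epsn n := epsn_pos n
          nlinarith
        linarith
      set X : Set (EuclideanSpace ℝ (Fin d)) :=
        (⋃ n ∈ Finset.range n₀, P n) ∪ {z | Metric.infDist z F ≤ β} with hXdef
      have hXclosed : IsClosed X := by
        apply IsClosed.union
        · exact Set.Finite.isClosed_biUnion (Finset.range n₀).finite_toSet
            (fun n _ => (hPcomp n).isClosed)
        · exact isClosed_le (Metric.continuous_infDist_pt F) continuous_const
      have hDX : D ⊆ X := by
        intro z hz
        obtain ⟨n, hn⟩ := Set.mem_iUnion.mp hz
        by_cases hnn₀ : n < n₀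
        · exact Or.inl (Set.mem_biUnion (Finset.mem_coe.mpr (Finset.mem_range.mpr hnn₀)) hn)
        · exact Or.inr (hclaim n (by omega) z hn)
      have hyX : y ∈ X := closure_minimal hDX hXclosed hy
      rcases hyX with hyX | hyX
      · obtain ⟨n, _, hn⟩ := Set.mem_iUnion₂.mp hyX
        exact hyD (Set.mem_iUnion.mpr ⟨n, hn⟩)
      · rw [Set.mem_setOf_eq] at hyX
        linarith
    apply isClosed_of_closure_subset
    rw [closure_union, hFclosed.closure_eq]
    intro z hz
    rcases hz with hz | hz
    · exact Or.inl hz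
    · exact hclD hz
  set V : Set (EuclideanSpace ℝ (Fin d)) := (F ∪ D)ᶜ with hVdef
  have hVopen : IsOpen V := hFD_closed.isOpen_compl
  set S : Set (EuclideanSpace ℝ (Fin d)) := F ∪ V with hSdef
  have hSGδ : IsGδ S := IsGδ.union hFclosed.isGδ hVopen.isGδ
  have hFS : F ⊆ S := Set.subset_union_left
  have hSdiff : S \ F = V := by
    apply Set.Subset.antisymm
    · rintro z ⟨hz1 | hz1, hz2⟩
      · exact absurd hz1 hz2
      · exact hz1
    · intro z hz
      exact ⟨Or.inr hz, fun hzF => hz (Or.inl hzF)⟩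
  obtain ⟨A, hAconv, hAeq⟩ := open_eq_iUnion_convex V hVopen
  refine ⟨S, f, hSGδ, hfemb, hFS, ⟨A, hAconv, by rw [← hAeq, ← hSdiff]⟩, ?_⟩
  intro v hv
  constructor
  · -- defective → v ∈ C
    intro hns
    by_contra hvC
    apply hns
    intro y hy
    by_cases hyF : y ∈ F
    · exact hFS hyF
    · refine Or.inr ?_
      intro hyFD
      rcases hyFD with hyFD | hyFD
      · exact hyF hyFD
      · obtain ⟨n, hn⟩ := Set.mem_iUnion.mp hyFD
        obtain ⟨w, hwCn, hwy⟩ := hn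
        have hwC : w ∈ C := hU ▸ Set.mem_iUnion.mpr ⟨n, hwCn⟩
        have hwinj : Function.Injective w := hinj w hwC
        have hrange : Set.range w = Set.range v :=
          hmark_hull n w v hwinj hv (hwy ▸ hy)
        -- v = w ∘ σ for a permutation σ, hence v ∈ C
        have hvC' : v ∈ C := by
          have hchoice : ∀ i : Fin N, ∃ j : Fin N, w j = v i := by
            intro i
            have : v i ∈ Set.range w := hrange ▸ Set.mem_range_self i
            exact this
          choose σ hσ using hchoice
          have hσinj : Function.Injective σ := by
            intro a b hab
            apply hv
            rw [← hσ a, ← hσ b, hab]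
          have hσbij : Function.Bijective σ := (Finite.injective_iff_bijective).mp hσinj
          have := hsym w hwC (Equiv.ofBijective σ hσbij)
          have heq : w ∘ (Equiv.ofBijective σ hσbij) = v := by
            funext i
            exact hσ i
          rwa [heq] at this
        exact hvC hvC'
  · -- v ∈ C → defective
    intro hvC hsub
    rw [hU] at hvC
    obtain ⟨n, hn⟩ := Set.mem_iUnion.mp hvC
    have hmem := hmark_mem n v
    have hmemS := hsub hmem
    rcases hmemS with hmF | hmV
    · exact hmark_notF n v hv hmF
    · exact hmV (Or.inr (Set.mem_iUnion.mpr ⟨n, Set.mem_image_of_mem _ hn⟩))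
end

section
/- Let S be a G_δ subset of a Polish linear space, X ⊆ S compact, and suppose S = (conv X) ∖ ⋃_m F_m where each F_m is a closed set with dist(p, X) ≤ 1/m for all p ∈ F_m. Then S ∖ X is a countable union of convex sets. -/
/-- Let `S` be a `G_δ` subset of a Polish linear space `E`, `X ⊆ S`
compact, and suppose `S = conv X ∖ ⋃ₘ Fₘ` where each `Fₘ` is closed and every
`p ∈ Fₘ` satisfies `dist(p, X) ≤ 1/(m+1)`.  Then `S ∖ X` is a countable union of
convex sets. -/
theorem diff_countable_union_convex
    {E : Type*} [NormedAddCommGroup E] [NormedSpace ℝ E] [PolishSpace E]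
    (S : Set E) (hS : IsGδ S)
    (X : Set E) (hX : IsCompact X) (hXS : X ⊆ S)
    (F : ℕ → Set E) (hF : ∀ m, IsClosed (F m))
    (hdist : ∀ m, ∀ p ∈ F m, Metric.infDist p X ≤ 1 / (m + 1))
    (hSeq : S = convexHull ℝ X \ ⋃ m, F m) :
    ∃ A : ℕ → Set E, (∀ n, Convex ℝ (A n)) ∧ S \ X = ⋃ n, A n := by
  classical
  rcases X.eq_empty_or_nonempty with hXe | hXne
  · refine ⟨fun _ => ∅, fun n => convex_empty, ?_⟩
    have : S = ∅ := by
      rw [hSeq, hXe]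
      simp
    simp [this]
  rcases (S \ X).eq_empty_or_nonempty with hSXe | ⟨p0, hp0⟩
  · exact ⟨fun _ => ∅, fun n => convex_empty, by simp [hSXe]⟩
  -- For each p in S \ X, find a radius r p > 0 s.t. ball p (r p) misses X and all F m.
  have key : ∀ p : E, ∃ r : ℝ, p ∈ S \ X →
      0 < r ∧ Metric.ball p r ∩ (X ∪ ⋃ m, F m) = ∅ := by
    intro p
    by_cases hp : p ∈ S \ X
    swap
    · exact ⟨1, fun h => absurd h hp⟩
    have hd : 0 < Metric.infDist p X :=
      (hX.isClosed.notMem_iff_infDist_pos hXne).1 hp.2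
    set d := Metric.infDist p X with hdd
    obtain ⟨m, hm⟩ := exists_nat_one_div_lt (half_pos hd)
    -- p is not in the closed set X ∪ ⋃ k < m, F k
    have hGclosed : IsClosed (X ∪ ⋃ k ∈ Finset.range (m + 1), F k) :=
      hX.isClosed.union (isClosed_biUnion_finset fun k _ => hF k)
    have hpG : p ∉ (X ∪ ⋃ k ∈ Finset.range (m + 1), F k) := by
      rintro (h | h)
      · exact hp.2 h
      · rcases Set.mem_iUnion₂.1 h with ⟨k, _, hk⟩
        have hpF : p ∉ ⋃ m, F m := by
          have := hp.1
          rw [hSeq] at this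
          exact this.2
        exact hpF (Set.mem_iUnion.2 ⟨k, hk⟩)
    obtain ⟨ε, hε, hball⟩ := Metric.isOpen_iff.1 hGclosed.isOpen_compl p hpG
    refine ⟨min ε (d / 2), fun _ => ⟨lt_min hε (half_pos hd), ?_⟩⟩
    apply Set.eq_empty_iff_forall_notMem.2
    rintro q ⟨hq, hqC⟩
    have hqε : q ∈ Metric.ball p ε :=
      Metric.mem_ball.2 (lt_of_lt_of_le (Metric.mem_ball.1 hq) (min_le_left _ _))
    have hqd : dist q p < d / 2 :=
      lt_of_lt_of_le (Metric.mem_ball.1 hq) (min_le_right _ _)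
    rcases hqC with hqX | hqF
    · exact hball hqε (Or.inl hqX)
    · rcases Set.mem_iUnion.1 hqF with ⟨k, hk⟩
      rcases lt_or_ge k (m + 1) with hkm | hkm
      · exact hball hqε (Or.inr (Set.mem_iUnion₂.2 ⟨k, Finset.mem_range.2 hkm, hk⟩))
      · -- k ≥ m + 1, so infDist q X ≤ 1/(k+1) ≤ 1/(m+1) < d/2
        have h1 : Metric.infDist q X ≤ 1 / (k + 1) := hdist k q hk
        have h2 : (1 : ℝ) / (k + 1) ≤ 1 / (m + 1) := by
          apply one_div_le_one_div_of_le
          · positivity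
          · exact_mod_cast Nat.succ_le_succ (le_of_lt (Nat.lt_of_succ_le hkm))
        have h3 : d ≤ Metric.infDist q X + dist p q :=
          Metric.infDist_le_infDist_add_dist
        rw [dist_comm] at h3
        linarith [hm]
  choose r hr using key
  -- countable subcover
  have hcover : ∀ p ∈ S \ X, Metric.ball p (r p) ∈ nhdsWithin p (S \ X) := fun p hp =>
    mem_nhdsWithin_of_mem_nhds (Metric.ball_mem_nhds p (hr p hp).1)
  obtain ⟨t, hts, htc, htU⟩ := TopologicalSpace.countable_cover_nhdsWithin hcover
  have htc' : (insert p0 t).Countable := htc.insert p0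
  obtain ⟨f, hf⟩ := htc'.exists_eq_range (Set.insert_nonempty _ _)
  have hfs : ∀ n, f n ∈ S \ X := by
    intro n
    have : f n ∈ insert p0 t := hf ▸ Set.mem_range_self n
    rcases this with h | h
    · exact h ▸ hp0
    · exact hts h
  refine ⟨fun n => Metric.ball (f n) (r (f n)) ∩ convexHull ℝ X,
    fun n => (convex_ball _ _).inter (convex_convexHull ℝ X), ?_⟩
  apply Set.Subset.antisymm
  · intro p hp
    rcases Set.mem_iUnion₂.1 (htU hp) with ⟨x, hxt, hx⟩
    have : x ∈ insert p0 t := Set.mem_insert_of_mem _ hxt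
    rw [hf] at this
    rcases this with ⟨n, rfl⟩
    have hpc : p ∈ convexHull ℝ X := (hSeq ▸ hp.1).1
    exact Set.mem_iUnion.2 ⟨n, hx, hpc⟩
  · intro p hp
    rcases Set.mem_iUnion.1 hp with ⟨n, hb, hc⟩
    have hdisj := (hr (f n) (hfs n)).2
    have hpC : p ∉ X ∪ ⋃ m, F m := fun h =>
      Set.eq_empty_iff_forall_notMem.1 hdisj p ⟨hb, h⟩
    refine ⟨?_, fun h => hpC (Or.inl h)⟩
    rw [hSeq]
    exact ⟨hc, fun h => hpC (Or.inr h)⟩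
end
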